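/- arXiv:2506.16156 — 10 statements merged into one kernel-verified Lean document; each statement's English description precedes it below -/
import Mathlib

section
/- Let H be a real number with 0 < H < 1/2 and let u, t be real numbers with 0 < u < t. Then ∫_u^t v^{H-3/2} (v-u)^{H-1/2} dv ≤ B(H + 1/2, 1 - 2H) · u^{2H-1}, where B denotes the Euler Beta function. (In particular, the integral on the left is finite.) -/
open MeasureTheory

open Set intervalIntegral Real in
lemma beta_integrand_integrable' {p q : ℝ} (hp : -1 < p) (hq : -1 < q) :
    IntervalIntegrable (fun z : ℝ => z ^ p * (1 - z) ^ q) volume 0 1 := by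
  apply IntervalIntegrable.trans (b := 1/2)
  · apply IntervalIntegrable.mul_continuousOn (intervalIntegrable_rpow' hp)
    apply ContinuousOn.rpow_const (continuous_const.sub continuous_id).continuousOn
    intro x hx
    rw [uIcc_of_le (by norm_num)] at hx
    left
    have := hx.2
    norm_num at this ⊢
    linarith
  · apply IntervalIntegrable.continuousOn_mul
    · have h := (intervalIntegrable_rpow' hq (a := 0) (b := 1/2)).comp_sub_left 1
      norm_num at h
      exact h.symm
    · apply ContinuousOn.rpow_const continuousOn_id
      intro x hx
      rw [uIcc_of_le (by norm_num)] at hx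
      left
      have := hx.1
      positivity

/-- The Euler Beta function `B(x,y) = ∫_0^1 z^(x-1) (1-z)^(y-1) dz`. -/
noncomputable def eulerBeta (x y : ℝ) : ℝ :=
  ∫ z in (0:ℝ)..1, z ^ (x - 1) * (1 - z) ^ (y - 1)

open Set intervalIntegral Real in
theorem stmt0 (H u t : ℝ) (hH0 : 0 < H) (hH : H < 1/2) (hu : 0 < u) (hut : u < t) :
    IntervalIntegrable (fun v : ℝ => v ^ (H - 3/2) * (v - u) ^ (H - 1/2)) volume u t ∧
    (∫ v in u..t, v ^ (H - 3/2) * (v - u) ^ (H - 1/2)) ≤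
      eulerBeta (H + 1/2) (1 - 2*H) * u ^ (2*H - 1) := by
  have ht : 0 < t := hu.trans hut
  -- Integrability
  have h1 : IntervalIntegrable (fun v : ℝ => (v - u) ^ (H - 1/2)) volume u t := by
    have h := (intervalIntegrable_rpow' (show (-1:ℝ) < H - 1/2 by linarith)
      (a := 0) (b := t - u)).comp_sub_right u
    simpa using h
  have hInt : IntervalIntegrable (fun v : ℝ => v ^ (H - 3/2) * (v - u) ^ (H - 1/2))
      volume u t := by
    apply h1.continuousOn_mul
    apply ContinuousOn.rpow_const continuousOn_id
    intro x hx
    rw [uIcc_of_le hut.le] at hx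
    left
    have := hx.1
    exact (hu.trans_le this).ne'
  refine ⟨hInt, ?_⟩
  -- Change of variables v = u / (1 - z)
  set c : ℝ := 1 - u / t with hc
  have hc0 : 0 < c := by
    have : u / t < 1 := (div_lt_one ht).2 hut
    simp only [hc]; linarith
  have hc1 : c < 1 := by
    have : 0 < u / t := div_pos hu ht
    simp only [hc]; linarith
  set φ : ℝ → ℝ := fun z => u / (1 - z) with hφ
  have himg : φ '' Ioo 0 c = Ioo u t := by
    ext v
    constructor
    · rintro ⟨z, ⟨hz0, hzc⟩, rfl⟩
      have hw0 : 0 < 1 - z := by simp only [hc] at hzc; nlinarith [(div_pos hu ht)]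
      constructor
      · rw [lt_div_iff₀ hw0]; nlinarith
      · rw [div_lt_iff₀ hw0]
        have h' : u / t < 1 - z := by simp only [hc] at hzc; linarith
        calc u = t * (u / t) := by field_simp
        _ < t * (1 - z) := by exact (mul_lt_mul_iff_right₀ ht).2 h'
    · rintro ⟨hv1, hv2⟩
      have hv0 : 0 < v := hu.trans hv1
      refine ⟨1 - u / v, ⟨?_, ?_⟩, ?_⟩
      · have : u / v < 1 := (div_lt_one hv0).2 hv1
        linarith
      · have : u / t < u / v := div_lt_div_of_pos_left hu hv0 hv2
        simp only [hc]; linarith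
      · simp only [hφ, sub_sub_cancel]
        field_simp
  have hderiv : ∀ z ∈ Ioo (0:ℝ) c, HasDerivWithinAt φ (u / (1 - z)^2) (Ioo 0 c) z := by
    intro z hz
    have hw0 : (1 : ℝ) - z ≠ 0 := by have := hz.2; intro h; nlinarith [hz.1]
    have h := ((hasDerivAt_const z u).div ((hasDerivAt_const z (1:ℝ)).sub (hasDerivAt_id z)) hw0)
    simp only [Pi.sub_apply, id_eq] at h
    have h2 : (0 * (1 - z) - u * (0 - 1)) / (1 - z) ^ 2 = u / (1 - z)^2 := by ring
    rw [h2] at h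
    exact h.hasDerivWithinAt
  have hinj : InjOn φ (Ioo 0 c) := by
    intro a ha b hb hab
    have hwa : (1:ℝ) - a ≠ 0 := by intro h; nlinarith [ha.1, ha.2]
    have hwb : (1:ℝ) - b ≠ 0 := by intro h; nlinarith [hb.1, hb.2]
    simp only [hφ] at hab
    field_simp at hab
    linarith
  have hpt : ∀ z ∈ Ioo (0:ℝ) c,
      |u / (1 - z)^2| • ((φ z) ^ (H - 3/2) * (φ z - u) ^ (H - 1/2)) =
      u ^ (2*H - 1) * (z ^ (H + 1/2 - 1) * (1 - z) ^ (1 - 2*H - 1)) := by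
    intro z hz
    have hz0 : 0 < z := hz.1
    have hw0 : 0 < 1 - z := by nlinarith [hz.2]
    have h1 : φ z - u = u * z / (1 - z) := by
      simp only [hφ]; field_simp; ring
    have habs : |u / (1 - z)^2| = u / (1-z)^2 := abs_of_pos (by positivity)
    rw [smul_eq_mul, habs, h1]
    simp only [hφ]
    rw [Real.div_rpow hu.le hw0.le, Real.div_rpow (by positivity) hw0.le,
        Real.mul_rpow hu.le hz0.le]
    rw [show (1:ℝ) - 2*H - 1 = -(2*H) by ring, Real.rpow_neg hw0.le,
        show H + 1/2 - 1 = H - 1/2 by ring]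
    have eu : u * u ^ (H - 3/2) * u ^ (H - 1/2) = u ^ (2*H - 1) := by
      nth_rewrite 1 [← Real.rpow_one u]
      rw [← Real.rpow_add hu, ← Real.rpow_add hu]
      congr 1; ring
    have ew : (1-z)^2 * ((1-z) ^ (H - 3/2) * (1-z) ^ (H - 1/2)) = (1-z) ^ (2*H) := by
      rw [← Real.rpow_two, ← Real.rpow_add hw0, ← Real.rpow_add hw0]
      congr 1; ring
    have n1 : ((1-z):ℝ) ^ (H - 3/2) ≠ 0 := (Real.rpow_pos_of_pos hw0 _).ne'
    have n2 : ((1-z):ℝ) ^ (H - 1/2) ≠ 0 := (Real.rpow_pos_of_pos hw0 _).ne'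
    have n3 : ((1-z):ℝ) ^ (2*H) ≠ 0 := (Real.rpow_pos_of_pos hw0 _).ne'
    have n4 : ((1-z):ℝ)^2 ≠ 0 := by positivity
    field_simp
    rw [show (H*2-3)/2 = H - 3/2 by ring, show (H*2-1)/2 = H - 1/2 by ring,
      show H*2 = 2*H by ring]
    rw [← eu, ← ew]
    ring
  -- the beta integrand
  set b : ℝ → ℝ := fun z => z ^ (H + 1/2 - 1) * (1 - z) ^ (1 - 2*H - 1) with hb
  have hbI : IntervalIntegrable b volume 0 1 :=
    beta_integrand_integrable' (by linarith) (by linarith)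
  have hbOn : IntegrableOn b (Ioo 0 1) volume := by
    have := (intervalIntegrable_iff_integrableOn_Ioc_of_le (by norm_num : (0:ℝ) ≤ 1)).1 hbI
    exact this.mono_set Ioo_subset_Ioc_self
  have hgOn : IntegrableOn (fun z => u ^ (2*H - 1) * b z) (Ioo 0 1) volume :=
    hbOn.const_mul _
  -- compute
  have key : (∫ v in u..t, v ^ (H - 3/2) * (v - u) ^ (H - 1/2)) =
      ∫ z in Ioo (0:ℝ) c, u ^ (2*H - 1) * b z := by
    rw [intervalIntegral.integral_of_le hut.le, integral_Ioc_eq_integral_Ioo, ← himg,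
      integral_image_eq_integral_abs_deriv_smul measurableSet_Ioo hderiv hinj]
    exact setIntegral_congr_fun measurableSet_Ioo hpt
  rw [key]
  have hmono : (∫ z in Ioo (0:ℝ) c, u ^ (2*H - 1) * b z) ≤
      ∫ z in Ioo (0:ℝ) 1, u ^ (2*H - 1) * b z := by
    apply setIntegral_mono_set hgOn
    · filter_upwards [ae_restrict_mem measurableSet_Ioo] with z hz
      have h1 : (0:ℝ) ≤ z := hz.1.le
      have h2 : (0:ℝ) ≤ 1 - z := by linarith [hz.2]
      exact mul_nonneg (Real.rpow_nonneg hu.le _)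
        (mul_nonneg (Real.rpow_nonneg h1 _) (Real.rpow_nonneg h2 _))
    · exact HasSubset.Subset.eventuallyLE (Ioo_subset_Ioo_right hc1.le)
  refine hmono.trans ?_
  rw [MeasureTheory.integral_const_mul]
  have : (∫ z in Ioo (0:ℝ) 1, b z) = eulerBeta (H + 1/2) (1 - 2*H) := by
    rw [← integral_Ioc_eq_integral_Ioo, ← intervalIntegral.integral_of_le
      (by norm_num : (0:ℝ) ≤ 1)]
    rfl
  rw [this, mul_comm]
end

section
/- For every real number H with 0 < H < 1/2, one has (1/2 - H) · B(H + 1/2, 1 - 2H) ≤ 1, where B denotes the Euler Beta function. -/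
/-! Writing `x = H + 1/2` and `y = 1 - 2H`, the recurrence `B(x, y + 1) = y / (x + y) · B(x, y)`
turns the claim into `(3/2 - H)/2 · B(x, y + 1) ≤ 1`, which removes the singularity of the
integrand at `z = 1`. The weighted AM–GM inequality
`z^H (1-z)^(1-2H) 1^H ≤ H z + (1-2H)(1-z) + H` then bounds the integrand of `B(x, y + 1)` by
`z^(-1/2)` times an affine function of `z`, whose integral is `4/3`; and
`(3/2 - H)/2 · 4/3 = 1 - 2H/3 ≤ 1`. -/

open MeasureTheory

lemma ofReal_eulerBeta (x y : ℝ) : (eulerBeta x y : ℂ) = Complex.betaIntegral x y := by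
  rw [eulerBeta, Complex.betaIntegral, ← intervalIntegral.integral_ofReal]
  refine intervalIntegral.integral_congr fun z hz => ?_
  rw [Set.uIcc_of_le zero_le_one] at hz
  push_cast
  rw [Complex.ofReal_cpow hz.1, Complex.ofReal_cpow (sub_nonneg.mpr hz.2)]
  push_cast
  ring

lemma eulerBeta_eq_Gamma_mul_div {x y : ℝ} (hx : 0 < x) (hy : 0 < y) :
    eulerBeta x y = Real.Gamma x * Real.Gamma y / Real.Gamma (x + y) := by
  have h := Complex.betaIntegral_eq_Gamma_mul_div x y (by simpa using hx) (by simpa using hy)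
  rw [← ofReal_eulerBeta, ← Complex.ofReal_add, Complex.Gamma_ofReal, Complex.Gamma_ofReal,
    Complex.Gamma_ofReal] at h
  exact_mod_cast h

lemma eulerBeta_add_one_right {x y : ℝ} (hx : 0 < x) (hy : 0 < y) :
    eulerBeta x (y + 1) = y / (x + y) * eulerBeta x y := by
  rw [eulerBeta_eq_Gamma_mul_div hx (by linarith), eulerBeta_eq_Gamma_mul_div hx hy, ← add_assoc,
    Real.Gamma_add_one hy.ne', Real.Gamma_add_one (by positivity)]
  have := Real.Gamma_pos_of_pos (add_pos hx hy)
  field_simp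

lemma rpow_mul_one_sub_rpow_le {a b z : ℝ} (ha : 0 ≤ a) (hb : 0 ≤ b) (hab : a + b ≤ 1)
    (hz : z ∈ Set.Icc (0 : ℝ) 1) :
    z ^ a * (1 - z) ^ b ≤ a * z + b * (1 - z) + (1 - a - b) := by
  have h := Real.geom_mean_le_arith_mean3_weighted ha hb (by linarith : 0 ≤ 1 - a - b) hz.1
    (sub_nonneg.mpr hz.2) zero_le_one (by ring)
  simpa only [Real.one_rpow, mul_one] using h

lemma eulerBeta_add_half_add_one_le {a b : ℝ} (ha : 0 ≤ a) (hb : 0 ≤ b) (hab : a + b ≤ 1) :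
    eulerBeta (a + 1/2) (b + 1) ≤ 2 - 4/3 * a - 2/3 * b := by
  let majorant : ℝ → ℝ := fun z => (1 - a) * z ^ (-(1/2) : ℝ) + (a - b) * z ^ (1/2 : ℝ)
  have hint_neg : IntervalIntegrable (fun z : ℝ => z ^ (-(1/2) : ℝ)) volume 0 1 :=
    intervalIntegral.intervalIntegrable_rpow' (by norm_num)
  have hint_pos : IntervalIntegrable (fun z : ℝ => z ^ (1/2 : ℝ)) volume 0 1 :=
    intervalIntegral.intervalIntegrable_rpow' (by norm_num)
  have hint_beta : IntervalIntegrable (fun z : ℝ => z ^ (a + 1/2 - 1) * (1 - z) ^ (b + 1 - 1))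
      volume 0 1 :=
    (intervalIntegral.intervalIntegrable_rpow' (by linarith)).mul_continuousOn
      ((continuousOn_const.sub continuousOn_id).rpow_const fun _ _ => Or.inr (by linarith))
  have hle : ∀ z ∈ Set.Ioo (0 : ℝ) 1,
      z ^ (a + 1/2 - 1) * (1 - z) ^ (b + 1 - 1) ≤ majorant z := by
    intro z hz
    have hsqrt : z ^ (-(1/2) : ℝ) * z = z ^ (1/2 : ℝ) := by
      rw [← Real.rpow_add_one hz.1.ne']; norm_num
    calc z ^ (a + 1/2 - 1) * (1 - z) ^ (b + 1 - 1)
        = z ^ (-(1/2) : ℝ) * (z ^ a * (1 - z) ^ b) := by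
          rw [show a + 1/2 - 1 = -(1/2) + a by ring, add_sub_cancel_right,
            Real.rpow_add hz.1, mul_assoc]
      _ ≤ z ^ (-(1/2) : ℝ) * (a * z + b * (1 - z) + (1 - a - b)) :=
          mul_le_mul_of_nonneg_left
            (rpow_mul_one_sub_rpow_le ha hb hab (Set.Ioo_subset_Icc_self hz))
            (Real.rpow_nonneg hz.1.le _)
      _ = majorant z := by simp only [majorant]; rw [← hsqrt]; ring
  have hmajorant : ∫ z in (0:ℝ)..1, majorant z = 2 - 4/3 * a - 2/3 * b := by
    simp only [majorant]
    rw [intervalIntegral.integral_add (hint_neg.const_mul _) (hint_pos.const_mul _),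
      intervalIntegral.integral_const_mul, intervalIntegral.integral_const_mul,
      integral_rpow (Or.inl (by norm_num)), integral_rpow (Or.inl (by norm_num))]
    norm_num
    ring
  rw [← hmajorant]
  exact intervalIntegral.integral_mono_on_of_le_Ioo zero_le_one hint_beta
    ((hint_neg.const_mul _).add (hint_pos.const_mul _)) hle

theorem stmt1 (H : ℝ) (hH0 : 0 < H) (hH : H < 1/2) :
    (1/2 - H) * eulerBeta (H + 1/2) (1 - 2*H) ≤ 1 := by
  have hrec := eulerBeta_add_one_right (x := H + 1/2) (y := 1 - 2*H) (by linarith) (by linarith)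
  have hbound := eulerBeta_add_half_add_one_le (a := H) (b := 1 - 2*H) hH0.le (by linarith)
    (by linarith)
  rw [show H + 1/2 + (1 - 2*H) = 3/2 - H by ring] at hrec
  rw [hrec, div_mul_eq_mul_div, div_le_iff₀ (by linarith)] at hbound
  nlinarith
end

section
/- Let H be a real number with 0 < H < 1/2 and let u, t be real numbers with 0 < u < t. Then |K(t,u)| ≤ c_H · [ (t-u)^{H-1/2} + u^{H-1/2} ]. -/
open MeasureTheory

section Aux
open Real Set

private lemma fbm_beta_eqOn {a b : ℝ} :
    ∀ x ∈ Icc (0:ℝ) 1,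
      ((x:ℂ) ^ ((a:ℂ) - 1) * (1 - (x:ℂ)) ^ ((b:ℂ) - 1)) =
        ((x ^ (a-1) * (1-x) ^ (b-1) : ℝ) : ℂ) := by
  intro x hx
  rw [Complex.ofReal_mul, Complex.ofReal_cpow hx.1, Complex.ofReal_cpow (by linarith [hx.2])]
  push_cast
  ring

private lemma fbm_beta_integrable {a b : ℝ} (ha : 0 < a) (hb : 0 < b) :
    IntervalIntegrable (fun x : ℝ => x ^ (a-1) * (1-x) ^ (b-1)) volume 0 1 := by
  have h := Complex.betaIntegral_convergent (u := (a:ℂ)) (v := (b:ℂ)) (by simpa) (by simpa)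
  rw [intervalIntegrable_iff_integrableOn_Ioc_of_le zero_le_one] at h ⊢
  have h2 : IntegrableOn (fun x : ℝ => ((x:ℂ) ^ ((a:ℂ) - 1) * (1 - (x:ℂ)) ^ ((b:ℂ) - 1)).re)
      (Ioc 0 1) volume := h.re
  refine MeasureTheory.IntegrableOn.congr_fun h2 (fun x hx => ?_) measurableSet_Ioc
  have := fbm_beta_eqOn (a := a) (b := b) x ⟨hx.1.le, hx.2⟩
  simp [Function.comp, this]

private lemma fbm_beta_value {a b : ℝ} (ha : 0 < a) (hb : 0 < b) :
    ∫ x in (0:ℝ)..1, x ^ (a-1) * (1-x) ^ (b-1) = Gamma a * Gamma b / Gamma (a+b) := by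
  have hab : Real.Gamma (a+b) ≠ 0 := (Real.Gamma_pos_of_pos (by linarith)).ne'
  have h := Complex.Gamma_mul_Gamma_eq_betaIntegral (s := (a:ℂ)) (t := (b:ℂ)) (by simpa) (by simpa)
  have hbeta : Complex.betaIntegral a b
      = ((∫ x in (0:ℝ)..1, x ^ (a-1) * (1-x) ^ (b-1) : ℝ) : ℂ) := by
    rw [Complex.betaIntegral, ← intervalIntegral.integral_ofReal]
    refine intervalIntegral.integral_congr (fun x hx => ?_)
    rw [uIcc_of_le zero_le_one] at hx
    exact fbm_beta_eqOn x hx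
  rw [hbeta] at h
  have h2 : (↑(Gamma a * Gamma b) : ℂ)
      = ↑(Gamma (a+b) * ∫ x in (0:ℝ)..1, x ^ (a-1) * (1-x) ^ (b-1)) := by
    push_cast [← Complex.Gamma_ofReal]
    exact_mod_cast h
  have h3 := Complex.ofReal_inj.mp h2
  field_simp
  linarith [h3]

private lemma fbm_gamma_prod_le {H : ℝ} (h0 : 0 ≤ H) (h1 : H ≤ 1/2) :
    Gamma (1/2 + H) * Gamma (1 - H) ≤ Real.sqrt π := by
  have hc := Real.convexOn_log_Gamma
  have m1 : (1/2 : ℝ) ∈ Ioi (0:ℝ) := by norm_num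
  have m2 : (1 : ℝ) ∈ Ioi (0:ℝ) := by norm_num
  have hw1 : (0:ℝ) ≤ 1 - 2*H := by linarith
  have hw2 : (0:ℝ) ≤ 2*H := by linarith
  have hA := hc.2 m1 m2 hw1 hw2 (by ring)
  have hB := hc.2 m1 m2 hw2 hw1 (by ring)
  simp only [smul_eq_mul, Function.comp] at hA hB
  have e1 : (1 - 2*H) * (1/2) + 2*H * 1 = 1/2 + H := by ring
  have e2 : 2*H * (1/2) + (1 - 2*H) * 1 = 1 - H := by ring
  rw [e1] at hA
  rw [e2] at hB
  have key : Real.log (Gamma (1/2 + H)) + Real.log (Gamma (1 - H)) ≤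
      Real.log (Gamma (1/2)) + Real.log (Gamma 1) := by linarith
  have hg1 : 0 < Gamma (1/2 + H) := Real.Gamma_pos_of_pos (by linarith)
  have hg2 : 0 < Gamma (1 - H) := Real.Gamma_pos_of_pos (by linarith)
  rw [← Real.log_mul hg1.ne' hg2.ne', ← Real.log_mul
    (Real.Gamma_pos_of_pos (by norm_num : (0:ℝ) < 1/2)).ne'
    (Real.Gamma_pos_of_pos one_pos).ne'] at key
  have hle := Real.exp_le_exp.mpr key
  rw [Real.exp_log (mul_pos hg1 hg2), Real.exp_log
    (mul_pos (Real.Gamma_pos_of_pos (by norm_num : (0:ℝ) < 1/2))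
      (Real.Gamma_pos_of_pos one_pos))] at hle
  calc Gamma (1/2 + H) * Gamma (1 - H) ≤ Gamma (1/2) * Gamma 1 := hle
    _ = Real.sqrt π := by rw [Real.Gamma_one_half_eq, Real.Gamma_one, mul_one]

private lemma fbm_gamma_key {H : ℝ} (h0 : 0 ≤ H) (h1 : H < 1/2) :
    Gamma (H + 1/2) * Gamma (1 - 2*H) ≤ Gamma (1/2 - H) := by
  have hdup := Real.Gamma_mul_Gamma_add_half (1/2 - H)
  have e1 : (1/2 - H) + 1/2 = 1 - H := by ring
  have e2 : 2 * (1/2 - H) = 1 - 2*H := by ring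
  rw [e1, e2] at hdup
  have e3 : 1 - (1 - 2*H) = 2*H := by ring
  rw [e3] at hdup
  have h2H : (1:ℝ) ≤ (2:ℝ) ^ (2*H) := Real.one_le_rpow one_le_two (by linarith)
  have hpi : (0:ℝ) < Real.sqrt π := Real.sqrt_pos.mpr Real.pi_pos
  have hgpos : 0 < Gamma (1 - 2*H) := Real.Gamma_pos_of_pos (by linarith)
  have hghalf : 0 < Gamma (H + 1/2) := Real.Gamma_pos_of_pos (by linarith)
  have hgsub : 0 < Gamma (1/2 - H) := Real.Gamma_pos_of_pos (by linarith)
  have hprod : Gamma (1/2 + H) * Gamma (1 - H) ≤ Real.sqrt π := fbm_gamma_prod_le h0 h1.le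
  have h2 : Gamma (H + 1/2) * Gamma (1 - 2*H) * ((2:ℝ)^(2*H) * Real.sqrt π)
      = Gamma (1/2 - H) * (Gamma (1/2 + H) * Gamma (1 - H)) := by
    rw [show (1/2 + H : ℝ) = H + 1/2 by ring]
    nlinarith [hdup]
  have h3 : Gamma (H + 1/2) * Gamma (1 - 2*H) * ((2:ℝ)^(2*H) * Real.sqrt π)
      ≤ Gamma (1/2 - H) * Real.sqrt π := by
    rw [h2]
    exact mul_le_mul_of_nonneg_left hprod hgsub.le
  have h4 : Gamma (1/2 - H) * Real.sqrt π ≤ Gamma (1/2 - H) * ((2:ℝ)^(2*H) * Real.sqrt π) := by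
    refine mul_le_mul_of_nonneg_left ?_ hgsub.le
    nlinarith [h2H, hpi]
  have h5 : (0:ℝ) < (2:ℝ)^(2*H) * Real.sqrt π := by positivity
  exact le_of_mul_le_mul_right (le_trans h3 h4) h5

private lemma fbm_subst_eq {H u t : ℝ} (hu : 0 < u) (hut : u < t) :
    ∫ v in u..t, v ^ (H - 3/2) * (v - u) ^ (H - 1/2)
      = ∫ s in Ioo (u/t) 1, u ^ (2*H-1) * (s ^ (-(2*H)) * (1-s) ^ (H - 1/2)) := by
  have ht : 0 < t := hu.trans hut
  have hq : 0 < u / t := div_pos hu ht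
  have hq1 : u / t < 1 := (div_lt_one ht).mpr hut
  have himg : (fun s : ℝ => u / s) '' Ioo (u/t) 1 = Ioo u t := by
    ext v
    constructor
    · rintro ⟨s, ⟨hs1, hs2⟩, rfl⟩
      have hs0 : 0 < s := hq.trans hs1
      constructor
      · rw [lt_div_iff₀ hs0]; nlinarith
      · rw [div_lt_iff₀ hs0]
        calc u = (u/t) * t := by field_simp
        _ < s * t := by nlinarith
        _ = t * s := by ring
    · intro hv
      have hv0 : 0 < v := hu.trans hv.1
      refine ⟨u / v, ⟨?_, ?_⟩, by field_simp⟩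
      · exact div_lt_div_of_pos_left hu hv0 hv.2
      · exact (div_lt_one hv0).mpr hv.1
  have hderiv : ∀ s ∈ Ioo (u/t) 1, HasDerivWithinAt (fun s : ℝ => u / s)
      (-(u / s^2)) (Ioo (u/t) 1) s := by
    intro s hs
    have hs0 : (0:ℝ) < s := hq.trans hs.1
    have h1 : HasDerivAt (fun s : ℝ => u / s) (u * (-(s^2)⁻¹)) s := by
      simpa [div_eq_mul_inv] using (hasDerivAt_inv hs0.ne').const_mul u
    have heq : u * (-(s^2)⁻¹) = -(u / s^2) := by field_simp
    exact (heq ▸ h1).hasDerivWithinAt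
  have hinj : InjOn (fun s : ℝ => u / s) (Ioo (u/t) 1) := by
    intro s1 h1 s2 h2 heq
    have hs1 : (0:ℝ) < s1 := hq.trans h1.1
    have hs2 : (0:ℝ) < s2 := hq.trans h2.1
    field_simp at heq
    exact heq.symm
  have key := integral_image_eq_integral_abs_deriv_smul measurableSet_Ioo hderiv hinj
    (fun v => v ^ (H - 3/2) * (v - u) ^ (H - 1/2))
  rw [himg] at key
  rw [intervalIntegral.integral_of_le hut.le, integral_Ioc_eq_integral_Ioo, key]
  refine setIntegral_congr_fun measurableSet_Ioo (fun s hs => ?_)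
  have hs0 : (0:ℝ) < s := hq.trans hs.1
  have h1s : (0:ℝ) < 1 - s := by linarith [hs.2]
  have habs : |(-(u / s^2))| = u / s^2 := by
    rw [abs_neg, abs_of_pos (by positivity)]
  have hsub : u / s - u = u * (1-s) / s := by field_simp
  show |(-(u / s^2))| • ((u/s) ^ (H - 3/2) * (u/s - u) ^ (H - 1/2)) = _
  rw [habs, hsub, smul_eq_mul]
  rw [Real.div_rpow hu.le hs0.le, Real.div_rpow (by positivity) hs0.le,
    Real.mul_rpow hu.le h1s.le]
  rw [Real.rpow_neg hs0.le]
  have hu1 : u / s^2 = u ^ (1:ℝ) / s ^ (2:ℝ) := by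
    rw [Real.rpow_one, Real.rpow_two]
  rw [hu1]
  have hunum : u ^ (1:ℝ) * u ^ (H - 3/2) * u ^ (H - 1/2) = u ^ (2*H-1) := by
    rw [← Real.rpow_add hu, ← Real.rpow_add hu]; congr 1; ring
  have hsden : s ^ (2:ℝ) * s ^ (H - 3/2) * s ^ (H - 1/2) = s ^ (2*H) := by
    rw [← Real.rpow_add hs0, ← Real.rpow_add hs0]; congr 1; ring
  calc u ^ (1:ℝ) / s ^ (2:ℝ)
        * (u ^ (H-3/2) / s ^ (H-3/2) * (u ^ (H-1/2) * (1-s) ^ (H-1/2) / s ^ (H-1/2)))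
      = (u ^ (1:ℝ) * u ^ (H-3/2) * u ^ (H-1/2)) * (1-s) ^ (H-1/2)
          / (s ^ (2:ℝ) * s ^ (H-3/2) * s ^ (H-1/2)) := by ring
    _ = u ^ (2*H-1) * (1-s) ^ (H-1/2) / s ^ (2*H) := by rw [hunum, hsden]
    _ = u ^ (2*H-1) * ((s ^ (2*H))⁻¹ * (1-s) ^ (H-1/2)) := by ring

private lemma fbm_int_bound {H u t : ℝ} (hH0 : 0 < H) (hH : H < 1/2) (hu : 0 < u)
    (hut : u < t) :
    ∫ v in u..t, v ^ (H - 3/2) * (v - u) ^ (H - 1/2)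
      ≤ u ^ (2*H-1) * (Gamma (1-2*H) * Gamma (H+1/2) / Gamma (3/2 - H)) := by
  have ht : 0 < t := hu.trans hut
  have ha : (0:ℝ) < 1 - 2*H := by linarith
  have hb : (0:ℝ) < H + 1/2 := by linarith
  have hexp1 : (1-2*H) - 1 = -(2*H) := by ring
  have hexp2 : (H+1/2) - 1 = H - 1/2 := by ring
  have hint := fbm_beta_integrable ha hb
  rw [hexp1, hexp2] at hint
  have hIoo : IntegrableOn (fun s : ℝ => s ^ (-(2*H)) * (1-s) ^ (H-1/2)) (Ioo 0 1) volume := by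
    have h2 := (intervalIntegrable_iff_integrableOn_Ioc_of_le zero_le_one).mp hint
    exact h2.mono_set Set.Ioo_subset_Ioc_self
  have hmono : (∫ s in Ioo (u/t) 1, s ^ (-(2*H)) * (1-s) ^ (H-1/2))
      ≤ ∫ s in Ioo 0 1, s ^ (-(2*H)) * (1-s) ^ (H-1/2) := by
    refine setIntegral_mono_set hIoo ?_ ?_
    · refine (ae_restrict_iff' measurableSet_Ioo).mpr (Filter.Eventually.of_forall fun s hs => ?_)
      have hs0 : (0:ℝ) ≤ s := hs.1.le
      have h1s : (0:ℝ) ≤ 1 - s := by linarith [hs.2.le]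
      positivity
    · exact HasSubset.Subset.eventuallyLE (Set.Ioo_subset_Ioo (div_pos hu ht).le le_rfl)
  have hval : (∫ s in Ioo 0 1, s ^ (-(2*H)) * (1-s) ^ (H-1/2))
      = Gamma (1-2*H) * Gamma (H+1/2) / Gamma (3/2 - H) := by
    rw [← integral_Ioc_eq_integral_Ioo, ← intervalIntegral.integral_of_le zero_le_one]
    have hv := fbm_beta_value ha hb
    rw [hexp1, hexp2] at hv
    rw [hv]
    congr 2
    ring
  rw [fbm_subst_eq hu hut, integral_const_mul]
  refine mul_le_mul_of_nonneg_left ?_ (Real.rpow_nonneg hu.le _)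
  rw [← hval]
  exact hmono

end Aux

/-- The normalizing constant `c_H` of the fBm Volterra kernel. -/
noncomputable def cH (H : ℝ) : ℝ :=
  Real.sqrt (2 * H * Real.Gamma (3/2 - H) / (Real.Gamma (2 - 2*H) * Real.Gamma (H + 1/2)))

/-- The fractional Brownian motion Volterra kernel `K(t,u)` for `H ∈ (0,1/2)`. -/
noncomputable def fbmK (H t u : ℝ) : ℝ :=
  if 0 < u ∧ u < t then
    cH H * ((u/t) ^ ((1:ℝ)/2 - H) * (t - u) ^ (H - 1/2) +
      (1/2 - H) * u ^ ((1:ℝ)/2 - H) * ∫ v in u..t, v ^ (H - 3/2) * (v - u) ^ (H - 1/2))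
  else 0

theorem stmt2 (H u t : ℝ) (hH0 : 0 < H) (hH : H < 1/2) (hu : 0 < u) (hut : u < t) :
    |fbmK H t u| ≤ cH H * ((t - u) ^ (H - 1/2) + u ^ (H - 1/2)) := by
  have ht : 0 < t := hu.trans hut
  have htu : (0:ℝ) < t - u := by linarith
  have h12 : (0:ℝ) < 1/2 - H := by linarith
  set A : ℝ := (u/t) ^ ((1:ℝ)/2 - H) * (t - u) ^ (H - 1/2) with hA
  set I : ℝ := ∫ v in u..t, v ^ (H - 3/2) * (v - u) ^ (H - 1/2) with hI
  set B : ℝ := (1/2 - H) * u ^ ((1:ℝ)/2 - H) * I with hB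
  have hI0 : 0 ≤ I := by
    refine intervalIntegral.integral_nonneg hut.le (fun v hv => ?_)
    have hv0 : 0 ≤ v := by have := hv.1; linarith
    have hvu : 0 ≤ v - u := by have := hv.1; linarith
    positivity
  have hA0 : 0 ≤ A := by positivity
  have hB0 : 0 ≤ B := by positivity
  have hcH : 0 ≤ cH H := Real.sqrt_nonneg _
  have hfbm : fbmK H t u = cH H * (A + B) := by
    rw [fbmK, if_pos ⟨hu, hut⟩]
  rw [hfbm, abs_of_nonneg (by positivity)]
  refine mul_le_mul_of_nonneg_left (add_le_add ?_ ?_) hcH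
  · -- A ≤ (t-u)^(H-1/2)
    have h1 : (u/t) ^ ((1:ℝ)/2 - H) ≤ 1 :=
      Real.rpow_le_one (div_nonneg hu.le ht.le) ((div_le_one ht).mpr hut.le) (by linarith)
    calc A ≤ 1 * (t - u) ^ (H - 1/2) :=
        mul_le_mul_of_nonneg_right h1 (Real.rpow_nonneg htu.le _)
      _ = (t - u) ^ (H - 1/2) := one_mul _
  · -- B ≤ u^(H-1/2)
    set C : ℝ := Real.Gamma (1-2*H) * Real.Gamma (H+1/2) / Real.Gamma (3/2 - H) with hC
    have hIb : I ≤ u ^ (2*H-1) * C := fbm_int_bound hH0 hH hu hut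
    have hC0 : 0 ≤ C := by
      have h1 := Real.Gamma_pos_of_pos (show (0:ℝ) < 1-2*H by linarith)
      have h2 := Real.Gamma_pos_of_pos (show (0:ℝ) < H+1/2 by linarith)
      have h3 := Real.Gamma_pos_of_pos (show (0:ℝ) < 3/2-H by linarith)
      positivity
    have hg32 : Real.Gamma (3/2 - H) = (1/2 - H) * Real.Gamma (1/2 - H) := by
      rw [show (3/2 - H : ℝ) = (1/2 - H) + 1 by ring, Real.Gamma_add_one h12.ne']
    have hgsub : 0 < Real.Gamma (1/2 - H) := Real.Gamma_pos_of_pos (by linarith)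
    have hkey : (1/2 - H) * C ≤ 1 := by
      rw [hC, hg32]
      rw [show (1/2 - H) * (Real.Gamma (1-2*H) * Real.Gamma (H+1/2)
          / ((1/2 - H) * Real.Gamma (1/2 - H)))
        = Real.Gamma (H+1/2) * Real.Gamma (1-2*H) / Real.Gamma (1/2 - H) by
          rw [mul_div_assoc', mul_div_mul_left _ _ h12.ne',
            mul_comm (Real.Gamma (1-2*H))]]
      rw [div_le_one hgsub]
      exact fbm_gamma_key hH0.le hH
    have hup : u ^ ((1:ℝ)/2-H) * u ^ (2*H-1) = u ^ (H-1/2) := by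
      rw [← Real.rpow_add hu]; congr 1; ring
    calc B ≤ (1/2 - H) * u ^ ((1:ℝ)/2 - H) * (u ^ (2*H-1) * C) := by
          refine mul_le_mul_of_nonneg_left hIb (by positivity)
      _ = u ^ (H-1/2) * ((1/2 - H) * C) := by rw [← hup]; ring
      _ ≤ u ^ (H-1/2) * 1 :=
          mul_le_mul_of_nonneg_left hkey (Real.rpow_nonneg hu.le _)
      _ = u ^ (H-1/2) := mul_one _
end

section
/- Let H be a real number with 0 < H < 1/2 and let u, s, t be real numbers with 0 < u < s ≤ t. Then K(t,u) ≤ K(s,u) and K(s,u) - K(t,u) ≤ c_H · [ (s-u)^{H-1/2} - (t-u)^{H-1/2} ]. -/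
open MeasureTheory intervalIntegral

lemma aux_contOn (q r u a b : ℝ) (ha : 0 < a) (hu : u < a) (hab : a ≤ b) :
    ContinuousOn (fun v : ℝ => v ^ q * (v - u) ^ r) (Set.uIcc a b) := by
  rw [Set.uIcc_of_le hab]
  intro v hv
  have hv0 : 0 < v := lt_of_lt_of_le ha hv.1
  have hvu : 0 < v - u := by linarith [hv.1]
  exact ((Real.continuousAt_rpow_const v q (Or.inl hv0.ne')).mul
    (((continuous_sub_right u).continuousAt).rpow_const (Or.inl hvu.ne'))).continuousWithinAt

lemma aux_integrable_sing (q p u s : ℝ) (hp : -1 < p) (hu : 0 < u) (hus : u ≤ s) :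
    IntervalIntegrable (fun v => v ^ q * (v - u) ^ p) volume u s := by
  have h1 : IntervalIntegrable (fun v : ℝ => (v - u) ^ p) volume u s := by
    have := (intervalIntegrable_rpow' hp (a := 0) (b := s - u)).comp_sub_right u
    simpa using this
  apply h1.continuousOn_mul
  rw [Set.uIcc_of_le hus]
  intro v hv
  have hv0 : 0 < v := lt_of_lt_of_le hu hv.1
  exact (Real.continuousAt_rpow_const v q (Or.inl hv0.ne')).continuousWithinAt

lemma aux_deriv (H u v : ℝ) (hv0 : 0 < v) (hvu : u < v) :
    HasDerivAt (fun v : ℝ => v ^ (H - 1/2) * (v - u) ^ (H - 1/2))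
      ((H - 1/2) * (v ^ (H - 3/2) * (v - u) ^ (H - 1/2) + v ^ (H - 1/2) * (v - u) ^ (H - 3/2)))
      v := by
  have h32 : H - 1/2 - 1 = H - 3/2 := by ring
  have h1 : HasDerivAt (fun v : ℝ => v ^ (H - 1/2)) ((H - 1/2) * v ^ (H - 3/2)) v := by
    have := Real.hasDerivAt_rpow_const (x := v) (p := H - 1/2) (Or.inl hv0.ne')
    rwa [h32] at this
  have h2 : HasDerivAt (fun v : ℝ => (v - u) ^ (H - 1/2))
      (1 * (H - 1/2) * (v - u) ^ (H - 3/2)) v := by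
    have := ((hasDerivAt_id v).sub_const u).rpow_const (p := H - 1/2)
      (Or.inl (by linarith : (0:ℝ) < v - u).ne')
    rwa [h32] at this
  have : HasDerivAt (fun v : ℝ => v ^ (H - 1/2) * (v - u) ^ (H - 1/2)) _ v := h1.mul h2
  convert this using 1
  ring

lemma aux_deriv2 (H u v : ℝ) (hvu : u < v) :
    HasDerivAt (fun v : ℝ => (v - u) ^ (H - 1/2))
      ((H - 1/2) * (v - u) ^ (H - 3/2)) v := by
  have h32 : H - 1/2 - 1 = H - 3/2 := by ring
  have := ((hasDerivAt_id v).sub_const u).rpow_const (p := H - 1/2)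
    (Or.inl (by linarith : (0:ℝ) < v - u).ne')
  rw [h32] at this
  simpa using this

lemma fbmK_eq (H u t : ℝ) (hu : 0 < u) (hut : u < t) :
    fbmK H t u = cH H * u ^ ((1:ℝ)/2 - H) *
      (t ^ (H - 1/2) * (t - u) ^ (H - 1/2)
        + (1/2 - H) * ∫ v in u..t, v ^ (H - 3/2) * (v - u) ^ (H - 1/2)) := by
  have ht : 0 < t := hu.trans hut
  rw [fbmK, if_pos ⟨hu, hut⟩, Real.div_rpow hu.le ht.le]
  have hth : t ^ (H - 1/2) = (t ^ ((1:ℝ)/2 - H))⁻¹ := by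
    rw [← Real.rpow_neg ht.le]; norm_num
  rw [hth]
  have htn : t ^ ((1:ℝ)/2 - H) ≠ 0 := (Real.rpow_pos_of_pos ht _).ne'
  field_simp

theorem stmt3 (H u s t : ℝ) (hH0 : 0 < H) (hH : H < 1/2) (hu : 0 < u) (hus : u < s)
    (hst : s ≤ t) :
    fbmK H t u ≤ fbmK H s u ∧
    fbmK H s u - fbmK H t u ≤ cH H * ((s - u) ^ (H - 1/2) - (t - u) ^ (H - 1/2)) := by
  have hs0 : 0 < s := hu.trans hus
  have hut : u < t := hus.trans_le hst
  have hp : (-1:ℝ) < H - 1/2 := by linarith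
  have hcH : 0 ≤ cH H := Real.sqrt_nonneg _
  have hun : 0 ≤ u ^ ((1:ℝ)/2 - H) := (Real.rpow_pos_of_pos hu _).le
  -- integrability facts on [s,t]
  have hInt1 : IntervalIntegrable (fun v => v ^ (H - 3/2) * (v - u) ^ (H - 1/2)) volume s t :=
    (aux_contOn _ _ u s t hs0 hus hst).intervalIntegrable
  have hInt2 : IntervalIntegrable (fun v => v ^ (H - 1/2) * (v - u) ^ (H - 3/2)) volume s t :=
    (aux_contOn _ _ u s t hs0 hus hst).intervalIntegrable
  have hInt3 : IntervalIntegrable (fun v : ℝ => (v - u) ^ (H - 3/2)) volume s t := by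
    have h := aux_contOn 0 (H - 3/2) u s t hs0 hus hst
    have h2 : ContinuousOn (fun v : ℝ => (v - u) ^ (H - 3/2)) (Set.uIcc s t) := by
      intro v hv
      simpa using h v hv
    exact h2.intervalIntegrable
  -- FTC 1
  have ftc1 : t ^ (H - 1/2) * (t - u) ^ (H - 1/2) - s ^ (H - 1/2) * (s - u) ^ (H - 1/2)
      = ∫ v in s..t, (H - 1/2) * (v ^ (H - 3/2) * (v - u) ^ (H - 1/2)
          + v ^ (H - 1/2) * (v - u) ^ (H - 3/2)) := by
    refine (intervalIntegral.integral_eq_sub_of_hasDerivAt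
      (f := fun v => v ^ (H - 1/2) * (v - u) ^ (H - 1/2)) ?_ ?_).symm
    · intro v hv
      rw [Set.uIcc_of_le hst] at hv
      exact aux_deriv H u v (hs0.trans_le hv.1) (hus.trans_le hv.1)
    · exact (hInt1.add hInt2).const_mul (H - 1/2)
  -- FTC 2
  have ftc2 : (t - u) ^ (H - 1/2) - (s - u) ^ (H - 1/2)
      = ∫ v in s..t, (H - 1/2) * (v - u) ^ (H - 3/2) := by
    refine (intervalIntegral.integral_eq_sub_of_hasDerivAt
      (f := fun v => (v - u) ^ (H - 1/2)) ?_ ?_).symm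
    · intro v hv
      rw [Set.uIcc_of_le hst] at hv
      exact aux_deriv2 H u v (hus.trans_le hv.1)
    · exact hInt3.const_mul (H - 1/2)
  -- split FTC1 integral
  have hsplit : (∫ v in s..t, (H - 1/2) * (v ^ (H - 3/2) * (v - u) ^ (H - 1/2)
          + v ^ (H - 1/2) * (v - u) ^ (H - 3/2)))
      = (H - 1/2) * ((∫ v in s..t, v ^ (H - 3/2) * (v - u) ^ (H - 1/2))
          + ∫ v in s..t, v ^ (H - 1/2) * (v - u) ^ (H - 3/2)) := by
    rw [intervalIntegral.integral_const_mul, intervalIntegral.integral_add hInt1 hInt2]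
  -- adjacent intervals
  have hadj : (∫ v in u..s, v ^ (H - 3/2) * (v - u) ^ (H - 1/2))
      + (∫ v in s..t, v ^ (H - 3/2) * (v - u) ^ (H - 1/2))
      = ∫ v in u..t, v ^ (H - 3/2) * (v - u) ^ (H - 1/2) :=
    intervalIntegral.integral_add_adjacent_intervals
      (aux_integrable_sing _ _ u s hp hu hus.le) hInt1
  -- key difference identity
  have key : fbmK H s u - fbmK H t u
      = cH H * u ^ ((1:ℝ)/2 - H) *
        ((1/2 - H) * ∫ v in s..t, v ^ (H - 1/2) * (v - u) ^ (H - 3/2)) := by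
    rw [fbmK_eq H u s hu hus, fbmK_eq H u t hu hut, ← hadj]
    rw [hsplit] at ftc1
    linear_combination (-(cH H * u ^ ((1:ℝ)/2 - H))) * ftc1
  have hJ : 0 ≤ ∫ v in s..t, v ^ (H - 1/2) * (v - u) ^ (H - 3/2) := by
    apply intervalIntegral.integral_nonneg hst
    intro v hv
    have hv0 : 0 < v := hs0.trans_le hv.1
    have hvu : 0 < v - u := by linarith [hv.1]
    positivity
  constructor
  · nlinarith [mul_nonneg (mul_nonneg hcH hun) (mul_nonneg (by linarith : (0:ℝ) ≤ 1/2 - H) hJ)]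
  · rw [key]
    have hsub : (s - u) ^ (H - 1/2) - (t - u) ^ (H - 1/2)
        = (1/2 - H) * ∫ v in s..t, (v - u) ^ (H - 3/2) := by
      rw [intervalIntegral.integral_const_mul] at ftc2
      linarith
    rw [hsub]
    rw [mul_assoc (cH H), ← mul_assoc (u ^ ((1:ℝ)/2 - H))]
    apply mul_le_mul_of_nonneg_left _ hcH
    rw [mul_comm (u ^ ((1:ℝ)/2 - H)), mul_assoc]
    apply mul_le_mul_of_nonneg_left _ (by linarith : (0:ℝ) ≤ 1/2 - H)
    rw [← intervalIntegral.integral_const_mul]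
    apply intervalIntegral.integral_mono_on hst ((hInt2.const_mul _))
      hInt3
    intro v hv
    have hv0 : 0 < v := hs0.trans_le hv.1
    have hvu : 0 < v - u := by linarith [hv.1]
    have h1 : u ^ ((1:ℝ)/2 - H) * v ^ (H - 1/2) ≤ 1 := by
      have hv' : v ^ (H - 1/2) = (v ^ ((1:ℝ)/2 - H))⁻¹ := by
        rw [← Real.rpow_neg hv0.le]; norm_num
      rw [hv', ← div_eq_mul_inv, ← Real.div_rpow hu.le hv0.le]
      exact Real.rpow_le_one (by positivity) ((div_le_one hv0).mpr (hus.le.trans hv.1))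
        (by linarith)
    calc u ^ ((1:ℝ)/2 - H) * (v ^ (H - 1/2) * (v - u) ^ (H - 3/2))
        = (u ^ ((1:ℝ)/2 - H) * v ^ (H - 1/2)) * (v - u) ^ (H - 3/2) := by ring
      _ ≤ 1 * (v - u) ^ (H - 3/2) := by
          apply mul_le_mul_of_nonneg_right h1 (Real.rpow_nonneg hvu.le _)
      _ = (v - u) ^ (H - 3/2) := one_mul _
end

section
/- Let H be a real number with 0 < H < 1/2 and let s, t be real numbers with 0 ≤ s < t. Then ∫_s^t [ (t-u)^{H-1/2} + u^{H-1/2} ]^2 du ≤ (2/H) · (t-s)^{2H}. -/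
open MeasureTheory

lemma my_rpow_subadd {a b p : ℝ} (ha : 0 ≤ a) (hb : 0 ≤ b) (hp : 0 ≤ p) (hp1 : p ≤ 1) :
    (a + b) ^ p ≤ a ^ p + b ^ p := by
  lift a to NNReal using ha
  lift b to NNReal using hb
  exact_mod_cast NNReal.rpow_add_le_add_rpow a b hp hp1

theorem stmt4 (H s t : ℝ) (hH0 : 0 < H) (hH : H < 1/2) (hs : 0 ≤ s) (hst : s < t) :
    (∫ u in s..t, ((t - u) ^ (H - 1/2) + u ^ (H - 1/2)) ^ 2) ≤ (2/H) * (t - s) ^ (2*H) := by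
  have hr : (-1 : ℝ) < 2*H - 1 := by linarith
  have hne : 2*H - 1 ≠ 0 := by intro h; linarith [hH]
  set f : ℝ → ℝ := fun u => ((t - u) ^ (H - 1/2) + u ^ (H - 1/2)) ^ 2 with hf
  set g : ℝ → ℝ := fun u => 2 * (t - u) ^ (2*H - 1) + 2 * u ^ (2*H - 1) with hg
  -- pointwise bound on Icc s t
  have hbound : ∀ u ∈ Set.Icc s t, f u ≤ g u := by
    intro u hu
    have hu0 : 0 ≤ u := le_trans hs hu.1
    have htu : 0 ≤ t - u := by linarith [hu.2]
    have h1 : ((t - u) ^ (H - 1/2)) ^ 2 = (t - u) ^ (2*H - 1) := by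
      rw [← Real.rpow_natCast ((t - u) ^ (H - 1/2)) 2, ← Real.rpow_mul htu]
      norm_num; ring_nf
    have h2 : (u ^ (H - 1/2)) ^ 2 = u ^ (2*H - 1) := by
      rw [← Real.rpow_natCast (u ^ (H - 1/2)) 2, ← Real.rpow_mul hu0]
      norm_num; ring_nf
    have key : ∀ a b : ℝ, (a + b) ^ 2 ≤ 2 * a ^ 2 + 2 * b ^ 2 := by
      intro a b; nlinarith [sq_nonneg (a - b)]
    calc f u ≤ 2 * ((t - u) ^ (H - 1/2)) ^ 2 + 2 * (u ^ (H - 1/2)) ^ 2 := key _ _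
      _ = g u := by rw [h1, h2]
  -- integrability
  have hig2 : IntervalIntegrable (fun u : ℝ => u ^ (2*H - 1)) volume s t :=
    intervalIntegral.intervalIntegrable_rpow' hr
  have hig1 : IntervalIntegrable (fun u : ℝ => (t - u) ^ (2*H - 1)) volume s t := by
    have := (intervalIntegral.intervalIntegrable_rpow' (a := t - s) (b := t - t) hr).comp_sub_left t
    simpa using this
  have hig : IntervalIntegrable g volume s t :=
    ((hig1.const_mul 2).add (hig2.const_mul 2))
  have hif : IntervalIntegrable f volume s t := by
    rw [intervalIntegrable_iff_integrableOn_Ioc_of_le hst.le]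
    have hgI : IntegrableOn g (Set.Ioc s t) volume := by
      rw [← intervalIntegrable_iff_integrableOn_Ioc_of_le hst.le]; exact hig
    refine hgI.integrable.mono ?_ ?_
    · have hcont : ContinuousOn f (Set.Ioo s t) := by
        apply ContinuousOn.pow
        apply ContinuousOn.add
        · exact (continuousOn_const.sub continuousOn_id).rpow_const
            (fun x hx => Or.inl (by show t - x ≠ 0; have := hx.2; intro h; nlinarith))
        · exact continuousOn_id.rpow_const
            (fun x hx => Or.inl (by have := lt_of_le_of_lt hs hx.1; positivity))
      have h1 : AEStronglyMeasurable f (volume.restrict (Set.Ioo s t)) :=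
        hcont.aestronglyMeasurable measurableSet_Ioo
      rwa [Measure.restrict_congr_set Ioo_ae_eq_Ioc] at h1
    · refine (ae_restrict_iff' measurableSet_Ioc).2 (Filter.Eventually.of_forall ?_)
      intro u hu
      have h := hbound u ⟨hu.1.le, hu.2⟩
      have hf0 : 0 ≤ f u := sq_nonneg _
      have hg0 : g u ≤ ‖g u‖ := le_abs_self _
      rw [Real.norm_eq_abs, abs_of_nonneg hf0]
      exact h.trans hg0
  -- compare
  have hmono := intervalIntegral.integral_mono_on hst.le hif hig hbound
  -- compute ∫ g
  have hI2 : (∫ u in s..t, u ^ (2*H - 1)) = (t ^ (2*H) - s ^ (2*H)) / (2*H) := by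
    rw [integral_rpow (Or.inl hr)]
    norm_num
  have hI1 : (∫ u in s..t, (t - u) ^ (2*H - 1)) = (t - s) ^ (2*H) / (2*H) := by
    rw [intervalIntegral.integral_comp_sub_left (fun x : ℝ => x ^ (2*H - 1)) t]
    rw [integral_rpow (Or.inl hr)]
    rw [sub_self, Real.zero_rpow (by linarith : 2*H - 1 + 1 ≠ 0)]
    norm_num
  have hIg : (∫ u in s..t, g u) = 2 * ((t - s) ^ (2*H) / (2*H)) + 2 * ((t ^ (2*H) - s ^ (2*H)) / (2*H)) := by
    rw [hg]
    rw [intervalIntegral.integral_add (hig1.const_mul 2) (hig2.const_mul 2),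
      intervalIntegral.integral_const_mul, intervalIntegral.integral_const_mul, hI1, hI2]
  -- subadditivity: t^{2H} - s^{2H} ≤ (t-s)^{2H}
  have hsub : t ^ (2*H) - s ^ (2*H) ≤ (t - s) ^ (2*H) := by
    have h := my_rpow_subadd (p := 2*H) hs (sub_nonneg.2 hst.le) (by linarith) (by linarith)
    have : s + (t - s) = t := by ring
    rw [this] at h
    linarith
  have hpos : 0 < 2*H := by linarith
  calc (∫ u in s..t, f u) ≤ ∫ u in s..t, g u := hmono
    _ = 2 * ((t - s) ^ (2*H) / (2*H)) + 2 * ((t ^ (2*H) - s ^ (2*H)) / (2*H)) := hIg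
    _ ≤ 2 * ((t - s) ^ (2*H) / (2*H)) + 2 * ((t - s) ^ (2*H) / (2*H)) := by
        gcongr
    _ = (2/H) * (t - s) ^ (2*H) := by field_simp; ring
end

section
/- Let H be a real number with 0 < H < 1/2 and let k ≥ 1 be an integer with 2kH < 1. Then the integral α = ∫_0^∞ [ y^{H-1/2} - (1+y)^{H-1/2} ] · y^{2(k-1)H + H - 1/2} dy is finite and satisfies α ≤ 1/(2kH) + (1/2 - H)/(1 - 2kH). -/
open MeasureTheory

/-- Bernoulli inequality for exponents in `[-1, 0]` and `s ≥ 0`. -/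
lemma bern_neg {s p : ℝ} (hs : 0 ≤ s) (hp1 : -1 ≤ p) (hp2 : p ≤ 0) :
    1 + p * s ≤ (1 + s) ^ p := by
  set q : ℝ := -p with hq
  have hq0 : 0 ≤ q := by linarith
  have hq1 : q ≤ 1 := by linarith
  have h1 : (1 + s) ^ q ≤ 1 + q * s :=
    rpow_one_add_le_one_add_mul_self (by linarith) hq0 hq1
  have ht : 0 < (1 + s) ^ q := Real.rpow_pos_of_pos (by linarith) q
  have hpq : p = -q := by rw [hq]; ring
  have hrw : (1 + s) ^ p = 1 / (1 + s) ^ q := by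
    rw [hpq, Real.rpow_neg (by linarith)]
    exact (one_div _).symm
  rw [hrw, le_div_iff₀ ht]
  have : 1 + p * s = 1 - q * s := by rw [hq]; ring
  rw [this]
  nlinarith [sq_nonneg (q * s), mul_nonneg hq0 hs]

/-- Key pointwise bound: `y^a + a*y^(a-1) ≤ (1+y)^a` for `y > 0` and `a ∈ [-1, 0]`. -/
lemma tangent_ineq {y a : ℝ} (hy : 0 < y) (ha1 : -1 ≤ a) (ha0 : a ≤ 0) :
    y ^ a + a * y ^ (a - 1) ≤ (1 + y) ^ a := by
  have h1y : (0:ℝ) < 1 / y := by positivity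
  have hb : 1 + a * (1 / y) ≤ (1 + 1 / y) ^ a := bern_neg h1y.le ha1 ha0
  have hrw : (1 + y : ℝ) = y * (1 + 1 / y) := by field_simp; ring
  have hmul : (1 + y) ^ a = y ^ a * (1 + 1 / y) ^ a := by
    rw [hrw, Real.mul_rpow hy.le (by positivity)]
  rw [hmul]
  have hya : 0 < y ^ a := Real.rpow_pos_of_pos hy a
  have h2 : y ^ a * (1 + a * (1 / y)) ≤ y ^ a * (1 + 1 / y) ^ a :=
    mul_le_mul_of_nonneg_left hb hya.le
  refine le_trans (le_of_eq ?_) h2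
  have : y ^ (a - 1) = y ^ a / y := by
    rw [Real.rpow_sub hy, Real.rpow_one]
  rw [this]
  field_simp

theorem stmt6 (H : ℝ) (k : ℕ) (hH0 : 0 < H) (hH : H < 1/2) (hk : 1 ≤ k)
    (hkH : 2 * (k:ℝ) * H < 1) :
    IntegrableOn
      (fun y : ℝ => (y ^ (H - 1/2) - (1 + y) ^ (H - 1/2)) * y ^ (2*((k:ℝ) - 1)*H + H - 1/2))
      (Set.Ioi 0) volume ∧
    (∫ y in Set.Ioi (0:ℝ),
        (y ^ (H - 1/2) - (1 + y) ^ (H - 1/2)) * y ^ (2*((k:ℝ) - 1)*H + H - 1/2)) ≤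
      1/(2*(k:ℝ)*H) + (1/2 - H)/(1 - 2*(k:ℝ)*H) := by
  have hk1 : (1:ℝ) ≤ (k:ℝ) := by exact_mod_cast hk
  set a : ℝ := H - 1/2 with ha_def
  set b : ℝ := 2*((k:ℝ) - 1)*H + H - 1/2 with hb_def
  set f : ℝ → ℝ := fun y => (y ^ a - (1 + y) ^ a) * y ^ b with hf_def
  have ha0 : a ≤ 0 := by rw [ha_def]; linarith
  have ha1 : -1 ≤ a := by rw [ha_def]; linarith
  have hpos : 0 < 2*(k:ℝ)*H := by nlinarith
  have hab : a + b = 2*(k:ℝ)*H - 1 := by rw [ha_def, hb_def]; ring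
  have hab2 : a - 1 + b = 2*(k:ℝ)*H - 2 := by rw [ha_def, hb_def]; ring
  -- nonnegativity of f on (0,∞)
  have hfnn : ∀ y : ℝ, 0 < y → 0 ≤ f y := by
    intro y hy
    apply mul_nonneg _ (Real.rpow_nonneg hy.le b)
    have := Real.rpow_le_rpow_of_nonpos hy (by linarith : y ≤ 1 + y) ha0
    linarith
  -- measurability
  have hmeas : AEStronglyMeasurable f (volume.restrict (Set.Ioi (0:ℝ))) := by
    apply ContinuousOn.aestronglyMeasurable _ measurableSet_Ioi
    apply ContinuousOn.mul
    · apply ContinuousOn.sub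
      · exact continuousOn_id.rpow_const fun x hx => Or.inl (ne_of_gt hx)
      · exact (continuousOn_const.add continuousOn_id).rpow_const
          fun x hx => Or.inl (by simp at hx; exact ne_of_gt (show (0:ℝ) < 1 + x by linarith))
    · exact continuousOn_id.rpow_const fun x hx => Or.inl (ne_of_gt hx)
  -- dominating functions
  have g1int : IntegrableOn (fun y : ℝ => y ^ (2*(k:ℝ)*H - 1)) (Set.Ioc 0 1) volume := by
    have h := intervalIntegral.intervalIntegrable_rpow'
      (show (-1:ℝ) < 2*(k:ℝ)*H - 1 by linarith) (a := 0) (b := 1)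
    exact (intervalIntegrable_iff_integrableOn_Ioc_of_le (by norm_num)).mp h
  have g2int : IntegrableOn (fun y : ℝ => (1/2 - H) * y ^ (2*(k:ℝ)*H - 2)) (Set.Ioi 1)
      volume :=
    (integrableOn_Ioi_rpow_of_lt (by linarith) one_pos).const_mul _
  -- pointwise bounds
  have hbd1 : ∀ y ∈ Set.Ioc (0:ℝ) 1, f y ≤ y ^ (2*(k:ℝ)*H - 1) := by
    intro y hy
    have hy0 : 0 < y := hy.1
    rw [← hab, Real.rpow_add hy0]
    apply mul_le_mul_of_nonneg_right _ (Real.rpow_nonneg hy0.le b)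
    have : 0 ≤ (1 + y) ^ a := Real.rpow_nonneg (by linarith) a
    linarith
  have hbd2 : ∀ y ∈ Set.Ioi (1:ℝ), f y ≤ (1/2 - H) * y ^ (2*(k:ℝ)*H - 2) := by
    intro y hy
    have hy0 : 0 < y := lt_trans one_pos hy
    have key := tangent_ineq hy0 ha1 ha0
    have h1 : y ^ a - (1 + y) ^ a ≤ (1/2 - H) * y ^ (a - 1) := by
      have : (1/2 - H) = -a := by rw [ha_def]; ring
      rw [this]; linarith
    have h2 : (y ^ a - (1 + y) ^ a) * y ^ b ≤ (1/2 - H) * y ^ (a - 1) * y ^ b :=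
      mul_le_mul_of_nonneg_right h1 (Real.rpow_nonneg hy0.le b)
    calc f y ≤ (1/2 - H) * y ^ (a - 1) * y ^ b := h2
      _ = (1/2 - H) * y ^ (2*(k:ℝ)*H - 2) := by
          rw [mul_assoc, ← Real.rpow_add hy0, hab2]
  -- integrability on the two pieces
  have int1 : IntegrableOn f (Set.Ioc 0 1) volume := by
    apply Integrable.mono g1int
      (hmeas.mono_measure (Measure.restrict_mono Set.Ioc_subset_Ioi_self le_rfl))
    filter_upwards [ae_restrict_mem measurableSet_Ioc] with y hy
    rw [Real.norm_eq_abs, Real.norm_eq_abs, abs_of_nonneg (hfnn y hy.1),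
      abs_of_nonneg (Real.rpow_nonneg hy.1.le _)]
    exact hbd1 y hy
  have int2 : IntegrableOn f (Set.Ioi 1) volume := by
    apply Integrable.mono g2int
      (hmeas.mono_measure (Measure.restrict_mono (Set.Ioi_subset_Ioi (by norm_num)) le_rfl))
    filter_upwards [ae_restrict_mem measurableSet_Ioi] with y hy
    have hy0 : (0:ℝ) < y := lt_trans one_pos hy
    rw [Real.norm_eq_abs, Real.norm_eq_abs, abs_of_nonneg (hfnn y hy0),
      abs_of_nonneg (mul_nonneg (by linarith) (Real.rpow_nonneg hy0.le _))]
    exact hbd2 y hy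
  have hunion : Set.Ioc (0:ℝ) 1 ∪ Set.Ioi 1 = Set.Ioi 0 :=
    Set.Ioc_union_Ioi_eq_Ioi (by norm_num)
  have intf : IntegrableOn f (Set.Ioi 0) volume := by
    rw [← hunion]; exact int1.union int2
  refine ⟨intf, ?_⟩
  have hsplit : (∫ y in Set.Ioi (0:ℝ), f y) =
      (∫ y in Set.Ioc (0:ℝ) 1, f y) + ∫ y in Set.Ioi (1:ℝ), f y := by
    rw [← hunion, setIntegral_union (Set.Ioc_disjoint_Ioi le_rfl) measurableSet_Ioi int1 int2]
  rw [hsplit]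
  have hI1 : (∫ y in Set.Ioc (0:ℝ) 1, f y) ≤ 1/(2*(k:ℝ)*H) := by
    have h := setIntegral_mono_on int1 g1int measurableSet_Ioc hbd1
    have hval : (∫ y in Set.Ioc (0:ℝ) 1, y ^ (2*(k:ℝ)*H - 1)) = 1/(2*(k:ℝ)*H) := by
      rw [← intervalIntegral.integral_of_le (by norm_num : (0:ℝ) ≤ 1),
        integral_rpow (Or.inl (by linarith))]
      rw [sub_add_cancel, Real.one_rpow, Real.zero_rpow (ne_of_gt hpos)]
      ring
    linarith
  have hI2 : (∫ y in Set.Ioi (1:ℝ), f y) ≤ (1/2 - H)/(1 - 2*(k:ℝ)*H) := by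
    have h := setIntegral_mono_on int2 g2int measurableSet_Ioi hbd2
    have hval : (∫ y in Set.Ioi (1:ℝ), (1/2 - H) * y ^ (2*(k:ℝ)*H - 2)) =
        (1/2 - H)/(1 - 2*(k:ℝ)*H) := by
      rw [integral_const_mul, integral_Ioi_rpow_of_lt (by linarith) one_pos]
      rw [Real.one_rpow]
      have h1 : 2*(k:ℝ)*H - 2 + 1 ≠ 0 := ne_of_lt (by linarith)
      have h2 : 1 - 2*(k:ℝ)*H ≠ 0 := ne_of_gt (by linarith)
      have key : (-1:ℝ)/(2*(k:ℝ)*H - 2 + 1) = 1/(1 - 2*(k:ℝ)*H) := by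
        rw [div_eq_div_iff h1 h2]; ring
      rw [key, mul_one_div]
    linarith
  linarith
end

section
/- Let H be a real number with 0 < H < 1/2 and let k ≥ 1 be an integer with 2kH < 1. Then the integral α' = ∫_0^∞ [ y^{H-1/2} - (1+y)^{H-1/2} ]^2 · y^{2(k-1)H} dy is finite and satisfies α' ≤ 1/(2kH) + (H - 1/2)^2 / (2 - 2kH). -/
open MeasureTheory

theorem stmt7 (H : ℝ) (k : ℕ) (hH0 : 0 < H) (hH : H < 1/2) (hk : 1 ≤ k)
    (hkH : 2 * (k:ℝ) * H < 1) :
    IntegrableOn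
      (fun y : ℝ => (y ^ (H - 1/2) - (1 + y) ^ (H - 1/2)) ^ 2 * y ^ (2*((k:ℝ) - 1)*H))
      (Set.Ioi 0) volume ∧
    (∫ y in Set.Ioi (0:ℝ),
        (y ^ (H - 1/2) - (1 + y) ^ (H - 1/2)) ^ 2 * y ^ (2*((k:ℝ) - 1)*H)) ≤
      1/(2*(k:ℝ)*H) + (H - 1/2) ^ 2 / (2 - 2*(k:ℝ)*H) := by
  set f : ℝ → ℝ := fun y : ℝ =>
    (y ^ (H - 1/2) - (1 + y) ^ (H - 1/2)) ^ 2 * y ^ (2*((k:ℝ) - 1)*H) with hf_def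
  have hk1 : (1:ℝ) ≤ (k:ℝ) := by exact_mod_cast hk
  have ha0 : 0 < 2 * (k:ℝ) * H := by nlinarith
  set c : ℝ := 1/2 - H with hc_def
  have hc0 : 0 < c := by simp [hc_def]; linarith
  have hc1 : c ≤ 1 := by simp [hc_def]; linarith
  have hfnn : ∀ y : ℝ, 0 ≤ y → 0 ≤ f y := fun y hy =>
    mul_nonneg (sq_nonneg _) (Real.rpow_nonneg hy _)
  -- key bound 1 : for y ∈ Ioc 0 1, f y ≤ y ^ (2kH - 1)
  have key1 : ∀ y ∈ Set.Ioc (0:ℝ) 1, f y ≤ y ^ (2 * (k:ℝ) * H - 1) := by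
    rintro y ⟨hy, -⟩
    have h1y : (0:ℝ) < 1 + y := by linarith
    have hd0 : 0 ≤ y ^ (H - 1/2) - (1 + y) ^ (H - 1/2) := by
      have := Real.rpow_le_rpow_of_nonpos hy (by linarith : y ≤ 1 + y)
        (by linarith : H - 1/2 ≤ 0)
      linarith
    have hd : y ^ (H - 1/2) - (1 + y) ^ (H - 1/2) ≤ y ^ (H - 1/2) := by
      have := Real.rpow_pos_of_pos h1y (H - 1/2)
      linarith
    have hsq : (y ^ (H - 1/2) - (1 + y) ^ (H - 1/2)) ^ 2 ≤ (y ^ (H - 1/2)) ^ 2 :=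
      pow_le_pow_left₀ hd0 hd 2
    calc f y ≤ (y ^ (H - 1/2)) ^ 2 * y ^ (2*((k:ℝ) - 1)*H) :=
          mul_le_mul_of_nonneg_right hsq (Real.rpow_nonneg hy.le _)
      _ = y ^ (2 * (k:ℝ) * H - 1) := by
          rw [sq, ← Real.rpow_add hy, ← Real.rpow_add hy]; ring_nf
  -- key bound 2 : for y ∈ Ioi 1, f y ≤ c^2 * y ^ (2kH - 3)
  have key2 : ∀ y ∈ Set.Ioi (1:ℝ), f y ≤ c^2 * y ^ (2 * (k:ℝ) * H - 3) := by
    intro y hy1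
    have hy : (0:ℝ) < y := lt_trans one_pos hy1
    have h1y : (0:ℝ) < 1 + y := by linarith
    have hc' : H - 1/2 = -c := by rw [hc_def]; ring
    set x : ℝ := 1/y with hx_def
    have hx0 : 0 < x := by positivity
    have hbern : (1 + x) ^ c ≤ 1 + c * x :=
      rpow_one_add_le_one_add_mul_self (by linarith) hc0.le hc1
    have hpowpos : 0 < (1 + x) ^ c := Real.rpow_pos_of_pos (by linarith) c
    have hmul : (1 - c * x) * (1 + x) ^ c ≤ 1 := by
      rcases le_or_gt (1 - c * x) 0 with h | h
      · exact le_trans (mul_nonpos_of_nonpos_of_nonneg h hpowpos.le) zero_le_one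
      · nlinarith [sq_nonneg (c * x)]
    have hle1 : 1 - c * x ≤ (1 + x) ^ (-c) := by
      rw [Real.rpow_neg (by linarith : (0:ℝ) ≤ 1 + x), ← one_div]
      exact (le_div_iff₀ hpowpos).2 hmul
    have h1 : (1 + y : ℝ) = y * (1 + x) := by rw [hx_def]; field_simp; ring
    have h2 : (1 + y) ^ (-c) = y ^ (-c) * (1 + x) ^ (-c) := by
      rw [h1, Real.mul_rpow hy.le (by linarith : (0:ℝ) ≤ 1 + x)]
    have h3 : y ^ (-c) * (1 - c * x) ≤ (1 + y) ^ (-c) := by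
      rw [h2]; exact mul_le_mul_of_nonneg_left hle1 (Real.rpow_nonneg hy.le _)
    have h4 : y ^ (-c) * x = y ^ (H - 3/2) := by
      rw [hx_def, one_div, ← Real.rpow_neg_one y, ← Real.rpow_add hy]
      congr 1; rw [hc_def]; ring
    have hd : y ^ (H - 1/2) - (1 + y) ^ (H - 1/2) ≤ c * y ^ (H - 3/2) := by
      rw [hc']
      have h5 : y ^ (-c) - y ^ (-c) * (1 - c * x) = c * y ^ (H - 3/2) := by
        rw [← h4]; ring
      have h6 := sub_le_sub_left h3 (y ^ (-c))
      exact h6.trans h5.le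
    have hd0 : 0 ≤ y ^ (H - 1/2) - (1 + y) ^ (H - 1/2) := by
      have := Real.rpow_le_rpow_of_nonpos hy (by linarith : y ≤ 1 + y)
        (by linarith : H - 1/2 ≤ 0)
      linarith
    have hsq : (y ^ (H - 1/2) - (1 + y) ^ (H - 1/2)) ^ 2 ≤ (c * y ^ (H - 3/2)) ^ 2 :=
      pow_le_pow_left₀ hd0 hd 2
    calc f y ≤ (c * y ^ (H - 3/2)) ^ 2 * y ^ (2*((k:ℝ) - 1)*H) :=
          mul_le_mul_of_nonneg_right hsq (Real.rpow_nonneg hy.le _)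
      _ = c^2 * (y ^ (H - 3/2) * y ^ (H - 3/2) * y ^ (2*((k:ℝ) - 1)*H)) := by ring
      _ = c^2 * y ^ (2 * (k:ℝ) * H - 3) := by
          rw [← Real.rpow_add hy, ← Real.rpow_add hy]; ring_nf
  -- measurability via continuity on Ioi 0
  have hcontOn : ContinuousOn f (Set.Ioi 0) := by
    intro y hy
    have hy0 : y ≠ 0 := (Set.mem_Ioi.1 hy).ne'
    have h1y0 : (1 + y) ≠ 0 := by have := Set.mem_Ioi.1 hy; positivity
    have c1 : ContinuousAt (fun y : ℝ => y ^ (H - 1/2)) y :=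
      Real.continuousAt_rpow_const y _ (Or.inl hy0)
    have c2 : ContinuousAt (fun y : ℝ => (1 + y) ^ (H - 1/2)) y :=
      (Real.continuousAt_rpow_const (1 + y) _ (Or.inl h1y0)).comp
        ((continuous_const.add continuous_id).continuousAt)
    have c3 : ContinuousAt (fun y : ℝ => y ^ (2*((k:ℝ) - 1)*H)) y :=
      Real.continuousAt_rpow_const y _ (Or.inl hy0)
    exact (((c1.sub c2).pow 2).mul c3).continuousWithinAt
  -- integrable dominating functions
  have hg1 : IntegrableOn (fun y : ℝ => y ^ (2 * (k:ℝ) * H - 1)) (Set.Ioc 0 1) volume :=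
    (intervalIntegral.intervalIntegrable_rpow' (by linarith : (-1:ℝ) < 2 * (k:ℝ) * H - 1)).1
  have hg2 : IntegrableOn (fun y : ℝ => c^2 * y ^ (2 * (k:ℝ) * H - 3)) (Set.Ioi 1) volume :=
    (integrableOn_Ioi_rpow_of_lt (by linarith : 2 * (k:ℝ) * H - 3 < -1) one_pos).const_mul _
  -- integrability of f on both pieces
  have hf1 : IntegrableOn f (Set.Ioc 0 1) volume := by
    refine hg1.mono' ((hcontOn.mono Set.Ioc_subset_Ioi_self).aestronglyMeasurable
      measurableSet_Ioc) ?_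
    rw [ae_restrict_iff' measurableSet_Ioc]
    filter_upwards with y hy
    rw [Real.norm_eq_abs, abs_of_nonneg (hfnn y hy.1.le)]
    exact key1 y hy
  have hf2 : IntegrableOn f (Set.Ioi 1) volume := by
    refine hg2.mono' ((hcontOn.mono (Set.Ioi_subset_Ioi zero_le_one)).aestronglyMeasurable
      measurableSet_Ioi) ?_
    rw [ae_restrict_iff' measurableSet_Ioi]
    filter_upwards with y hy
    rw [Real.norm_eq_abs, abs_of_nonneg (hfnn y (by linarith [Set.mem_Ioi.1 hy]))]
    exact key2 y hy
  have hunion : Set.Ioc (0:ℝ) 1 ∪ Set.Ioi 1 = Set.Ioi 0 := Set.Ioc_union_Ioi_eq_Ioi zero_le_one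
  have hint : IntegrableOn f (Set.Ioi 0) volume := by
    rw [← hunion]; exact hf1.union hf2
  refine ⟨hint, ?_⟩
  -- split the integral
  have hsplit : (∫ y in Set.Ioi (0:ℝ), f y) =
      (∫ y in Set.Ioc (0:ℝ) 1, f y) + ∫ y in Set.Ioi (1:ℝ), f y := by
    rw [← hunion]
    exact setIntegral_union (Set.Ioc_disjoint_Ioi le_rfl) measurableSet_Ioi hf1 hf2
  -- bound piece 1
  have hb1 : (∫ y in Set.Ioc (0:ℝ) 1, f y) ≤ 1 / (2 * (k:ℝ) * H) := by
    have h1 : (∫ y in Set.Ioc (0:ℝ) 1, f y) ≤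
        ∫ y in Set.Ioc (0:ℝ) 1, y ^ (2 * (k:ℝ) * H - 1) :=
      setIntegral_mono_on hf1 hg1 measurableSet_Ioc key1
    have h2 : (∫ y in Set.Ioc (0:ℝ) 1, y ^ (2 * (k:ℝ) * H - 1)) = 1 / (2 * (k:ℝ) * H) := by
      rw [← intervalIntegral.integral_of_le zero_le_one,
        integral_rpow (Or.inl (by linarith : (-1:ℝ) < 2 * (k:ℝ) * H - 1))]
      rw [Real.one_rpow, Real.zero_rpow (by linarith : 2 * (k:ℝ) * H - 1 + 1 ≠ 0)]
      ring_nf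
    linarith
  -- bound piece 2
  have hb2 : (∫ y in Set.Ioi (1:ℝ), f y) ≤ (H - 1/2)^2 / (2 - 2 * (k:ℝ) * H) := by
    have h1 : (∫ y in Set.Ioi (1:ℝ), f y) ≤
        ∫ y in Set.Ioi (1:ℝ), c^2 * y ^ (2 * (k:ℝ) * H - 3) :=
      setIntegral_mono_on hf2 hg2 measurableSet_Ioi key2
    have h2 : (∫ y in Set.Ioi (1:ℝ), c^2 * y ^ (2 * (k:ℝ) * H - 3)) =
        (H - 1/2)^2 / (2 - 2 * (k:ℝ) * H) := by
      rw [integral_const_mul, integral_Ioi_rpow_of_lt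
        (by linarith : 2 * (k:ℝ) * H - 3 < -1) one_pos]
      rw [Real.one_rpow, hc_def]
      have hne1 : 2 * (k:ℝ) * H - 3 + 1 ≠ 0 := by linarith
      have hne2 : 2 - 2 * (k:ℝ) * H ≠ 0 := by linarith
      rw [show 2 * (k:ℝ) * H - 3 + 1 = -(2 - 2 * (k:ℝ) * H) by ring]
      field_simp
      ring
    linarith
  calc (∫ y in Set.Ioi (0:ℝ), f y)
      = (∫ y in Set.Ioc (0:ℝ) 1, f y) + ∫ y in Set.Ioi (1:ℝ), f y := hsplit
    _ ≤ 1/(2*(k:ℝ)*H) + (H - 1/2) ^ 2 / (2 - 2*(k:ℝ)*H) := add_le_add hb1 hb2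
end

section
/- Let H be a real number with 0 < H < 1/2, let m ≥ 1 be an integer, and let u₀, s be real numbers with 0 < u₀ < s. Then the integral over the ordered simplex { u₀ < u_1 < u_2 < ⋯ < u_m < s } of the function ∏_{h=1}^{m} [ (s - u_h)^{H-1/2} + u_h^{H-1/2} ]^2 du_1 ⋯ du_m is at most (2^m / (m! · H^m)) · (s - u₀)^{2mH}. -/
open MeasureTheory

set_option maxHeartbeats 1000000

/-- Symmetrization bound: the integral of a product over the ordered simplex is at most
`1/m!` times the `m`-th power of the one-dimensional integral. -/
theorem stmt9_aux (g : ℝ → ℝ) (u₀ s : ℝ) (m : ℕ) (hg0 : ∀ u, 0 ≤ g u)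
    (hgmeas : Measurable g) (hgInt : IntegrableOn g (Set.Ioo u₀ s)) :
    (m.factorial : ℝ) *
      ∫ u in {u : Fin m → ℝ | StrictMono u ∧ ∀ i, u i ∈ Set.Ioo u₀ s}, ∏ h, g (u h)
      ≤ (∫ x in Set.Ioo u₀ s, g x) ^ m := by
  set C : Set (Fin m → ℝ) := {u | ∀ i, u i ∈ Set.Ioo u₀ s} with hC
  have hCmeas : MeasurableSet C := by
    have : C = ⋂ i, (fun u : Fin m → ℝ => u i) ⁻¹' (Set.Ioo u₀ s) := by
      ext u; simp [hC]
    rw [this]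
    exact MeasurableSet.iInter fun i => (measurable_pi_apply i) measurableSet_Ioo
  set f : (Fin m → ℝ) → ℝ := fun u => ∏ h, g (u h) with hf
  have hf0 : ∀ u, 0 ≤ f u := fun u => Finset.prod_nonneg fun h _ => hg0 _
  set gt : ℝ → ℝ := (Set.Ioo u₀ s).indicator g with hgt
  have hgtInt : Integrable gt := hgInt.integrable_indicator measurableSet_Ioo
  have hgt0 : ∀ u, 0 ≤ gt u := fun u => Set.indicator_nonneg (fun x _ => hg0 x) u
  have hftInt : Integrable (fun u : Fin m → ℝ => ∏ h, gt (u h)) :=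
    Integrable.fintype_prod (fun _ => hgtInt)
  have hfC : IntegrableOn f C := by
    refine (hftInt.integrableOn (s := C)).congr_fun ?_ hCmeas
    intro u hu
    exact Finset.prod_congr rfl fun h _ => Set.indicator_of_mem (hu h) g
  have hCle : ∫ u in C, f u ≤ (∫ x in Set.Ioo u₀ s, g x) ^ m := by
    calc ∫ u in C, f u = ∫ u in C, ∏ h, gt (u h) := by
          refine setIntegral_congr_fun hCmeas ?_
          intro u hu
          exact (Finset.prod_congr rfl fun h _ => Set.indicator_of_mem (hu h) g).symm
      _ ≤ ∫ u : Fin m → ℝ, ∏ h, gt (u h) :=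
          setIntegral_le_integral hftInt
            (Filter.Eventually.of_forall fun u => Finset.prod_nonneg fun h _ => hgt0 _)
      _ = (∫ x, gt x) ^ (Fintype.card (Fin m)) :=
          MeasureTheory.integral_fintype_prod_eq_pow gt
      _ = (∫ x in Set.Ioo u₀ s, g x) ^ m := by
          rw [integral_indicator measurableSet_Ioo, Fintype.card_fin]
  -- the permuted simplices
  set S : Equiv.Perm (Fin m) → Set (Fin m → ℝ) :=
    fun σ => {u | StrictMono (u ∘ σ) ∧ ∀ i, u i ∈ Set.Ioo u₀ s} with hS
  have hSmeas : ∀ σ, MeasurableSet (S σ) := by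
    intro σ
    have h2 : MeasurableSet (⋂ (i) (j) (_ : i < j), {u : Fin m → ℝ | u (σ i) < u (σ j)}) :=
      MeasurableSet.iInter fun i => MeasurableSet.iInter fun j =>
        MeasurableSet.iInter fun _ =>
          measurableSet_lt (measurable_pi_apply _) (measurable_pi_apply _)
    have : S σ = (⋂ (i) (j) (_ : i < j), {u : Fin m → ℝ | u (σ i) < u (σ j)}) ∩ C := by
      ext u
      simp only [hS, hC, Set.mem_inter_iff, Set.mem_iInter, Set.mem_setOf_eq]
      constructor
      · rintro ⟨h1, h2⟩
        exact ⟨fun i j hij => h1 hij, h2⟩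
      · rintro ⟨h1, h2⟩
        exact ⟨fun i j hij => h1 i j hij, h2⟩
    rw [this]
    exact h2.inter hCmeas
  have hSdisj : Pairwise (Function.onFun Disjoint S) := by
    intro σ τ hne
    rw [Function.onFun, Set.disjoint_left]
    rintro u ⟨hσ, -⟩ ⟨hτ, -⟩
    apply hne
    have hrange : Set.range (u ∘ σ) = Set.range (u ∘ τ) := by
      rw [Set.range_comp, Set.range_comp, σ.surjective.range_eq, τ.surjective.range_eq]
    have huv : u ∘ σ = u ∘ τ := by
      haveI : WellFoundedLT (Fin m) := inferInstance
      exact (StrictMono.range_inj hσ hτ).mp hrange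
    have huinj : Function.Injective u := by
      intro a b hab
      obtain ⟨a', rfl⟩ := σ.surjective a
      obtain ⟨b', rfl⟩ := σ.surjective b
      exact congrArg σ (hσ.injective hab)
    exact Equiv.ext fun i => huinj (congrFun huv i)
  have hSint : ∀ τ : Equiv.Perm (Fin m), ∫ u in S τ, f u = ∫ u in S 1, f u := by
    intro τ
    have hT := volume_measurePreserving_piCongrLeft (fun _ : Fin m => ℝ)
      (τ.symm : Fin m ≃ Fin m)
    set T := MeasurableEquiv.piCongrLeft (fun _ : Fin m => ℝ) (τ.symm : Fin m ≃ Fin m) with hTdef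
    have hTapp : ∀ (u : Fin m → ℝ) (j : Fin m), T u j = u (τ j) := by
      intro u j
      have h := Equiv.piCongrLeft_apply_apply (fun _ : Fin m => ℝ)
        (τ.symm : Fin m ≃ Fin m) u (τ j)
      rw [Equiv.symm_apply_apply] at h
      rw [hTdef, MeasurableEquiv.coe_piCongrLeft]
      exact h
    have hTu : ∀ u : Fin m → ℝ, T u = u ∘ τ := fun u => funext fun j => hTapp u j
    have hpre : T ⁻¹' (S 1) = S τ := by
      ext u
      simp only [Set.mem_preimage, hS, Set.mem_setOf_eq, hTu u]
      constructor
      · rintro ⟨h1, h2⟩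
        refine ⟨by simpa [Function.comp] using h1, fun i => ?_⟩
        have := h2 (τ.symm i)
        simpa using this
      · rintro ⟨h1, h2⟩
        exact ⟨by simpa [Function.comp] using h1, fun i => by simpa using h2 (τ i)⟩
    have hchange := hT.setIntegral_preimage_emb T.measurableEmbedding f (S 1)
    rw [hpre] at hchange
    rw [← hchange]
    refine setIntegral_congr_fun (hSmeas τ) ?_
    intro u _
    show f u = f (T u)
    calc f u = ∏ h, g (u (τ h)) := (Equiv.prod_comp τ (fun i => g (u i))).symm
      _ = f (T u) := Finset.prod_congr rfl fun h _ => by rw [hTapp]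
  have hUnion : (⋃ σ, S σ) ⊆ C := by
    intro u hu
    obtain ⟨σ, hσ⟩ := Set.mem_iUnion.mp hu
    exact hσ.2
  have hfU : IntegrableOn f (⋃ σ, S σ) := hfC.mono_set hUnion
  have hsum : ∫ u in ⋃ σ, S σ, f u = ∑' σ : Equiv.Perm (Fin m), ∫ u in S σ, f u :=
    integral_iUnion hSmeas hSdisj hfU
  have hcard : (Fintype.card (Equiv.Perm (Fin m)) : ℝ) = (m.factorial : ℝ) := by
    rw [Fintype.card_perm, Fintype.card_fin]
  have h1 : ∑' σ : Equiv.Perm (Fin m), ∫ u in S σ, f u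
      = (m.factorial : ℝ) * ∫ u in S 1, f u := by
    rw [tsum_fintype, Finset.sum_congr rfl (fun σ _ => hSint σ), Finset.sum_const,
      Finset.card_univ, nsmul_eq_mul, hcard]
  have hS1 : {u : Fin m → ℝ | StrictMono u ∧ ∀ i, u i ∈ Set.Ioo u₀ s} = S 1 := by
    ext u
    simp [hS]
  rw [hS1]
  calc (m.factorial : ℝ) * ∫ u in S 1, f u
      = ∫ u in ⋃ σ, S σ, f u := by rw [hsum, h1]
    _ ≤ ∫ u in C, f u :=
        setIntegral_mono_set hfC (Filter.Eventually.of_forall fun u => hf0 u)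
          (HasSubset.Subset.eventuallyLE hUnion)
    _ ≤ (∫ x in Set.Ioo u₀ s, g x) ^ m := hCle

theorem stmt9 (H : ℝ) (m : ℕ) (u₀ s : ℝ) (hH0 : 0 < H) (hH : H < 1/2) (hm : 1 ≤ m)
    (hu₀ : 0 < u₀) (hs : u₀ < s) :
    (∫ u in {u : Fin m → ℝ | StrictMono u ∧ ∀ i, u i ∈ Set.Ioo u₀ s},
        ∏ h : Fin m, ((s - u h) ^ (H - 1/2) + (u h) ^ (H - 1/2)) ^ 2) ≤
      (2:ℝ)^m / ((m.factorial : ℝ) * H^m) * (s - u₀) ^ (2*(m:ℝ)*H) := by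
  have hsu : 0 < s - u₀ := sub_pos.mpr hs
  have h2H0 : 0 < 2 * H := by linarith
  have h2H1 : 2 * H ≤ 1 := by linarith
  set g : ℝ → ℝ := fun u => ((s - u) ^ (H - 1/2) + u ^ (H - 1/2)) ^ 2 with hgdef
  set b : ℝ → ℝ := fun u => 2 * (s - u) ^ (2*H - 1) + 2 * u ^ (2*H - 1) with hbdef
  have hg0 : ∀ u, 0 ≤ g u := fun u => sq_nonneg _
  have hgmeas : Measurable g := by
    rw [hgdef]; fun_prop
  -- interval integrability of the bounding function pieces
  have hb1 : IntervalIntegrable (fun u : ℝ => (s - u) ^ (2*H - 1)) volume u₀ s := by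
    have h := (intervalIntegral.intervalIntegrable_rpow' (a := s - u₀) (b := 0)
      (r := 2*H - 1) (by linarith)).comp_sub_left s
    simpa using h
  have hb2 : IntervalIntegrable (fun u : ℝ => u ^ (2*H - 1)) volume u₀ s :=
    intervalIntegral.intervalIntegrable_rpow' (by linarith)
  have hbII : IntervalIntegrable b volume u₀ s := by
    rw [hbdef]
    exact (hb1.const_mul 2).add (hb2.const_mul 2)
  have hbInt : IntegrableOn b (Set.Ioo u₀ s) := by
    have := (intervalIntegrable_iff_integrableOn_Ioc_of_le hs.le).mp hbII
    exact this.mono_set Set.Ioo_subset_Ioc_self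
  -- pointwise bound g ≤ b on Ioo
  have hrpow_sq : ∀ x : ℝ, 0 ≤ x → (x ^ (H - 1/2)) ^ 2 = x ^ (2*H - 1) := by
    intro x hx
    rw [← Real.rpow_natCast (x ^ (H - 1/2)) 2, ← Real.rpow_mul hx]
    norm_num
    ring_nf
  have hgb : ∀ u ∈ Set.Ioo u₀ s, g u ≤ b u := by
    intro u hu
    have h1 : (0:ℝ) ≤ s - u := by linarith [hu.2]
    have h2 : (0:ℝ) ≤ u := by linarith [hu.1]
    have e1 := hrpow_sq (s - u) h1
    have e2 := hrpow_sq u h2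
    simp only [hgdef, hbdef]
    nlinarith [sq_nonneg ((s - u) ^ (H - 1/2) - u ^ (H - 1/2))]
  have hgInt : IntegrableOn g (Set.Ioo u₀ s) := by
    refine Integrable.mono' hbInt hgmeas.aestronglyMeasurable ?_
    filter_upwards [ae_restrict_mem measurableSet_Ioo] with u hu
    rw [Real.norm_eq_abs, abs_of_nonneg (hg0 u)]
    exact hgb u hu
  -- subadditivity: s^(2H) ≤ (s-u₀)^(2H) + u₀^(2H)
  have hsub : s ^ (2*H) ≤ (s - u₀) ^ (2*H) + u₀ ^ (2*H) := by
    have h := NNReal.rpow_add_le_add_rpow ((s - u₀).toNNReal) (u₀.toNNReal)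
      h2H0.le h2H1
    rw [← Real.toNNReal_add hsu.le hu₀.le] at h
    have h2 := NNReal.coe_le_coe.mpr h
    rw [NNReal.coe_rpow, NNReal.coe_add, NNReal.coe_rpow, NNReal.coe_rpow,
      Real.coe_toNNReal _ (by linarith : (0:ℝ) ≤ s - u₀ + u₀),
      Real.coe_toNNReal _ hsu.le, Real.coe_toNNReal _ hu₀.le] at h2
    have : s - u₀ + u₀ = s := by ring
    rwa [this] at h2
  -- one-dimensional integral bound
  have hIb : ∫ u in Set.Ioo u₀ s, b u ≤ 2 / H * (s - u₀) ^ (2*H) := by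
    rw [← integral_Ioc_eq_integral_Ioo, ← intervalIntegral.integral_of_le hs.le]
    have e1 : ∫ u in u₀..s, (s - u) ^ (2*H - 1) = (s - u₀) ^ (2*H) / (2*H) := by
      rw [intervalIntegral.integral_comp_sub_left (fun u : ℝ => u ^ (2*H - 1)) s]
      rw [sub_self]
      rw [integral_rpow (Or.inl (by linarith))]
      rw [Real.zero_rpow (by linarith : 2*H - 1 + 1 ≠ 0)]
      rw [show 2*H - 1 + 1 = 2*H by ring, sub_zero]
    have e2 : ∫ u in u₀..s, u ^ (2*H - 1) = (s ^ (2*H) - u₀ ^ (2*H)) / (2*H) := by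
      rw [integral_rpow (Or.inl (by linarith))]
      rw [show 2*H - 1 + 1 = 2*H by ring]
    have hsplit : ∫ u in u₀..s, b u
        = 2 * ((s - u₀) ^ (2*H) / (2*H)) + 2 * ((s ^ (2*H) - u₀ ^ (2*H)) / (2*H)) := by
      rw [hbdef]
      rw [intervalIntegral.integral_add (hb1.const_mul 2) (hb2.const_mul 2),
        intervalIntegral.integral_const_mul, intervalIntegral.integral_const_mul, e1, e2]
    rw [hsplit]
    have hcomb : 2 * ((s - u₀) ^ (2*H) / (2*H)) + 2 * ((s ^ (2*H) - u₀ ^ (2*H)) / (2*H))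
        = ((s - u₀) ^ (2*H) + (s ^ (2*H) - u₀ ^ (2*H))) / H := by
      field_simp
    rw [hcomb, div_le_iff₀ hH0]
    have : 2 / H * (s - u₀) ^ (2*H) * H = 2 * (s - u₀) ^ (2*H) := by
      field_simp
    rw [this]
    linarith [hsub]
  have hgI0 : 0 ≤ ∫ x in Set.Ioo u₀ s, g x :=
    setIntegral_nonneg measurableSet_Ioo fun x _ => hg0 x
  have hgB : ∫ x in Set.Ioo u₀ s, g x ≤ 2 / H * (s - u₀) ^ (2*H) :=
    le_trans (setIntegral_mono_on hgInt hbInt measurableSet_Ioo hgb) hIb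
  -- apply the symmetrization lemma
  have key := stmt9_aux g u₀ s m hg0 hgmeas hgInt
  have key2 : (m.factorial : ℝ) *
      ∫ u in {u : Fin m → ℝ | StrictMono u ∧ ∀ i, u i ∈ Set.Ioo u₀ s}, ∏ h, g (u h)
      ≤ (2 / H * (s - u₀) ^ (2*H)) ^ m :=
    le_trans key (pow_le_pow_left₀ hgI0 hgB m)
  have hfac : (0:ℝ) < (m.factorial : ℝ) := by exact_mod_cast m.factorial_pos
  have hpow : ((s - u₀) ^ (2*H)) ^ m = (s - u₀) ^ (2*(m:ℝ)*H) := by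
    rw [← Real.rpow_natCast ((s - u₀) ^ (2*H)) m, ← Real.rpow_mul hsu.le]
    congr 1
    push_cast
    ring
  have hrhs : (2:ℝ)^m / ((m.factorial : ℝ) * H^m) * (s - u₀) ^ (2*(m:ℝ)*H)
      = (2 / H * (s - u₀) ^ (2*H)) ^ m / (m.factorial : ℝ) := by
    rw [mul_pow, div_pow, hpow]
    ring
  rw [hrhs, le_div_iff₀ hfac]
  calc (∫ u in {u : Fin m → ℝ | StrictMono u ∧ ∀ i, u i ∈ Set.Ioo u₀ s},
        ∏ h : Fin m, ((s - u h) ^ (H - 1/2) + (u h) ^ (H - 1/2)) ^ 2) * (m.factorial : ℝ)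
      = (m.factorial : ℝ) *
        ∫ u in {u : Fin m → ℝ | StrictMono u ∧ ∀ i, u i ∈ Set.Ioo u₀ s}, ∏ h, g (u h) := by
        rw [mul_comm]
    _ ≤ (2 / H * (s - u₀) ^ (2*H)) ^ m := key2
end

section
/- Let H > 0 be real, let c ≤ b ≤ k be integers, and let u₀, s be real numbers with 0 < u₀ < s. Assume that 2H + 4(b-c)H ≥ 1, that 2H + 4(k-b)H ≥ 1, and that 4H - 1 + 4(b-c)H ≥ 1. Then ∫_{u₀}^{s} [ (u - u₀)^{2H-1} + u₀^{2H-1} ] · (u - u₀)^{4(b-c)H} · [ (s - u)^{2H-1} + (u - u₀)^{2H-1} ] · (s - u)^{4(k-b)H} du ≤ 2 · [ (s - u₀)^{2H-1} + u₀^{2H-1} ] · (s - u₀)^{4(k-c)H + 2H}. -/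
open MeasureTheory

theorem stmt16 (H : ℝ) (c b k : ℤ) (u₀ s : ℝ) (hH : 0 < H) (hcb : c ≤ b) (hbk : b ≤ k)
    (hu₀ : 0 < u₀) (hs : u₀ < s)
    (h1 : 1 ≤ 2*H + 4*((b:ℝ) - (c:ℝ))*H) (h2 : 1 ≤ 2*H + 4*((k:ℝ) - (b:ℝ))*H)
    (h3 : 1 ≤ 4*H - 1 + 4*((b:ℝ) - (c:ℝ))*H) :
    (∫ u in u₀..s,
        ((u - u₀) ^ (2*H - 1) + u₀ ^ (2*H - 1)) * (u - u₀) ^ (4*((b:ℝ) - (c:ℝ))*H) *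
          (((s - u) ^ (2*H - 1) + (u - u₀) ^ (2*H - 1)) * (s - u) ^ (4*((k:ℝ) - (b:ℝ))*H))) ≤
      2 * ((s - u₀) ^ (2*H - 1) + u₀ ^ (2*H - 1)) * (s - u₀) ^ (4*((k:ℝ) - (c:ℝ))*H + 2*H) := by
  set L : ℝ := s - u₀ with hLdef
  have hL0 : 0 < L := sub_pos.mpr hs
  set α : ℝ := 4*((b:ℝ) - (c:ℝ))*H with hαdef
  set β : ℝ := 4*((k:ℝ) - (b:ℝ))*H with hβdef
  have hα : 0 ≤ α := by
    have h : (c:ℝ) ≤ (b:ℝ) := by exact_mod_cast hcb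
    have h' : 0 ≤ (b:ℝ) - (c:ℝ) := by linarith
    positivity
  have hβ : 0 ≤ β := by
    have h : (b:ℝ) ≤ (k:ℝ) := by exact_mod_cast hbk
    have h' : 0 ≤ (k:ℝ) - (b:ℝ) := by linarith
    positivity
  set p : ℝ := 2*H - 1 with hpdef
  have hpα : 0 ≤ p + α := by rw [hpdef]; linarith
  have hpβ : 0 ≤ p + β := by rw [hpdef]; linarith
  have h2pα : 0 ≤ 2*p + α := by rw [hpdef]; linarith
  have hq1 : 1 ≤ p + β + 1 := by rw [hpdef]; linarith
  set A : ℝ := L ^ (p + α) + u₀ ^ p * L ^ α with hAdef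
  set C : ℝ := L ^ (2*p + α + β) + u₀ ^ p * L ^ (p + α + β) with hCdef
  have hA : 0 ≤ A := by
    have := Real.rpow_nonneg hL0.le (p + α)
    have := Real.rpow_nonneg hL0.le α
    have := Real.rpow_nonneg hu₀.le p
    positivity
  have hC : 0 ≤ C := by
    have := Real.rpow_nonneg hL0.le (2*p + α + β)
    have := Real.rpow_nonneg hL0.le (p + α + β)
    have := Real.rpow_nonneg hu₀.le p
    positivity
  set f : ℝ → ℝ := fun u =>
    ((u - u₀) ^ p + u₀ ^ p) * (u - u₀) ^ α *
      (((s - u) ^ p + (u - u₀) ^ p) * (s - u) ^ β) with hfdef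
  set g : ℝ → ℝ := fun u => A * (s - u) ^ (p + β) + C with hgdef
  -- pointwise bound on the open interval
  have hbound : ∀ u ∈ Set.Ioo u₀ s, f u ≤ g u := by
    intro u hu
    obtain ⟨hu1, hu2⟩ := hu
    set x : ℝ := u - u₀ with hxdef
    set y : ℝ := s - u with hydef
    have hx0 : 0 < x := sub_pos.mpr hu1
    have hy0 : 0 < y := sub_pos.mpr hu2
    have hxL : x ≤ L := by rw [hxdef, hLdef]; linarith
    have hyL : y ≤ L := by rw [hydef, hLdef]; linarith
    have e1 : x ^ (p + α) = x ^ p * x ^ α := Real.rpow_add hx0 _ _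
    have e2 : x ^ (2*p + α) = x ^ p * x ^ p * x ^ α := by
      rw [show (2*p + α : ℝ) = p + p + α by ring, Real.rpow_add hx0, Real.rpow_add hx0]
    have e3 : y ^ (p + β) = y ^ p * y ^ β := Real.rpow_add hy0 _ _
    have hexp : f u = x ^ (p + α) * y ^ (p + β) + x ^ (2*p + α) * y ^ β
        + u₀ ^ p * x ^ α * y ^ (p + β) + u₀ ^ p * x ^ (p + α) * y ^ β := by
      rw [hfdef]; simp only; rw [← hxdef, ← hydef, e1, e2, e3]; ring
    have t1 : x ^ (p + α) * y ^ (p + β) ≤ L ^ (p + α) * y ^ (p + β) :=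
      mul_le_mul_of_nonneg_right (Real.rpow_le_rpow hx0.le hxL hpα)
        (Real.rpow_nonneg hy0.le _)
    have t2 : x ^ (2*p + α) * y ^ β ≤ L ^ (2*p + α + β) := by
      calc x ^ (2*p + α) * y ^ β ≤ L ^ (2*p + α) * L ^ β :=
            mul_le_mul (Real.rpow_le_rpow hx0.le hxL h2pα)
              (Real.rpow_le_rpow hy0.le hyL hβ) (Real.rpow_nonneg hy0.le _)
              (Real.rpow_nonneg hL0.le _)
        _ = L ^ (2*p + α + β) := (Real.rpow_add hL0 _ _).symm
    have t3 : u₀ ^ p * x ^ α * y ^ (p + β) ≤ u₀ ^ p * L ^ α * y ^ (p + β) :=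
      mul_le_mul_of_nonneg_right
        (mul_le_mul_of_nonneg_left (Real.rpow_le_rpow hx0.le hxL hα)
          (Real.rpow_nonneg hu₀.le _)) (Real.rpow_nonneg hy0.le _)
    have t4 : u₀ ^ p * x ^ (p + α) * y ^ β ≤ u₀ ^ p * L ^ (p + α + β) := by
      calc u₀ ^ p * x ^ (p + α) * y ^ β ≤ u₀ ^ p * (L ^ (p + α) * L ^ β) := by
            rw [mul_assoc]
            exact mul_le_mul_of_nonneg_left
              (mul_le_mul (Real.rpow_le_rpow hx0.le hxL hpα)
                (Real.rpow_le_rpow hy0.le hyL hβ) (Real.rpow_nonneg hy0.le _)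
                (Real.rpow_nonneg hL0.le _)) (Real.rpow_nonneg hu₀.le _)
        _ = u₀ ^ p * L ^ (p + α + β) := by rw [← Real.rpow_add hL0]
    have huf : f u ≤ L ^ (p + α) * y ^ (p + β) + L ^ (2*p + α + β)
        + u₀ ^ p * L ^ α * y ^ (p + β) + u₀ ^ p * L ^ (p + α + β) := by
      rw [hexp]; linarith
    calc f u ≤ _ := huf
      _ = g u := by rw [hgdef]; simp only; rw [← hydef, hAdef, hCdef]; ring
  have hf_nonneg : ∀ u ∈ Set.Ioo u₀ s, 0 ≤ f u := by
    intro u hu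
    obtain ⟨hu1, hu2⟩ := hu
    have hx0 : (0:ℝ) ≤ u - u₀ := by linarith
    have hy0 : (0:ℝ) ≤ s - u := by linarith
    rw [hfdef]
    have := Real.rpow_nonneg hx0
    have := Real.rpow_nonneg hy0
    have := Real.rpow_nonneg hu₀.le p
    positivity
  -- integrability of g
  have hg1 : IntervalIntegrable (fun u : ℝ => (s - u) ^ (p + β)) volume u₀ s := by
    have hbase : IntervalIntegrable (fun x : ℝ => x ^ (p + β)) volume (s - u₀) (s - s) :=
      (intervalIntegral.intervalIntegrable_rpow' (by linarith : (-1:ℝ) < p + β)).symm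
    simpa using hbase.comp_sub_left s
  have hgA : IntervalIntegrable (fun u : ℝ => A * (s - u) ^ (p + β)) volume u₀ s :=
    hg1.const_mul A
  have hgint : IntervalIntegrable g volume u₀ s := by
    rw [hgdef]; exact hgA.add intervalIntegrable_const
  -- measurability of f
  have hfmeas : AEStronglyMeasurable f (volume.restrict (Set.Ioc u₀ s)) := by
    apply Measurable.aestronglyMeasurable
    rw [hfdef]
    fun_prop
  -- a.e. membership in the open interval under the restricted measure
  have haes : ∀ᵐ u ∂(volume.restrict (Set.Ioc u₀ s)), u ∈ Set.Ioo u₀ s := by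
    have ha1 : ∀ᵐ u ∂(volume.restrict (Set.Ioc u₀ s)), u ∈ Set.Ioc u₀ s :=
      ae_restrict_mem measurableSet_Ioc
    have ha2 : ∀ᵐ u ∂(volume.restrict (Set.Ioc u₀ s)), u ≠ s := by
      rw [ae_iff]
      have hsub : {a : ℝ | ¬a ≠ s} ⊆ {s} := by
        intro u hu
        simp only [Set.mem_setOf_eq, not_not] at hu
        exact Set.mem_singleton_iff.mpr hu
      refine measure_mono_null hsub ?_
      exact le_antisymm ((Measure.restrict_le_self _).trans_eq (measure_singleton s))
        (zero_le)
    filter_upwards [ha1, ha2] with u hu hne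
    exact ⟨hu.1, lt_of_le_of_ne hu.2 hne⟩
  have hfint : IntervalIntegrable f volume u₀ s := by
    rw [intervalIntegrable_iff_integrableOn_Ioc_of_le hs.le]
    refine Integrable.mono' hgint.1 hfmeas ?_
    filter_upwards [haes] with u hu
    rw [Real.norm_eq_abs, abs_of_nonneg (hf_nonneg u hu)]
    exact hbound u hu
  -- compare integrals
  have hle : (∫ u in u₀..s, f u) ≤ ∫ u in u₀..s, g u := by
    refine intervalIntegral.integral_mono_ae_restrict hs.le hfint hgint ?_
    have hb2 : ∀ᵐ u ∂(volume.restrict (Set.Icc u₀ s)), u ∈ Set.Ioo u₀ s := by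
      rw [← Measure.restrict_congr_set Ioo_ae_eq_Icc]
      exact ae_restrict_mem measurableSet_Ioo
    filter_upwards [hb2] with u hu using hbound u hu
  -- compute the integral of g
  have hgval : (∫ u in u₀..s, g u) = A * (L ^ (p + β + 1) / (p + β + 1)) + C * L := by
    rw [hgdef]
    rw [intervalIntegral.integral_add hgA intervalIntegrable_const]
    rw [intervalIntegral.integral_const_mul, intervalIntegral.integral_const]
    have hcomp : (∫ u in u₀..s, (s - u) ^ (p + β)) =
        ∫ x in (s - s)..(s - u₀), x ^ (p + β) :=
      intervalIntegral.integral_comp_sub_left (fun x => x ^ (p + β)) s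
    rw [hcomp, sub_self, integral_rpow (Or.inl (by linarith : (-1:ℝ) < p + β)),
      Real.zero_rpow (by linarith : p + β + 1 ≠ 0), smul_eq_mul, hLdef]
    ring
  -- final estimate
  have hgRHS : A * (L ^ (p + β + 1) / (p + β + 1)) + C * L ≤
      2 * (L ^ p + u₀ ^ p) * L ^ (4*((k:ℝ) - (c:ℝ))*H + 2*H) := by
    have hdiv : L ^ (p + β + 1) / (p + β + 1) ≤ L ^ (p + β + 1) :=
      div_le_self (Real.rpow_nonneg hL0.le _) hq1
    have step1 : A * (L ^ (p + β + 1) / (p + β + 1)) + C * L ≤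
        A * L ^ (p + β + 1) + C * L := by
      have := mul_le_mul_of_nonneg_left hdiv hA
      linarith
    refine step1.trans (le_of_eq ?_)
    have hγ : 4*((k:ℝ) - (c:ℝ))*H + 2*H = α + β + 2*H := by
      rw [hαdef, hβdef]; ring
    have key : ∀ r t : ℝ, L ^ r * L ^ t = L ^ (r + t) :=
      fun r t => (Real.rpow_add hL0 r t).symm
    rw [hγ, hAdef, hCdef]
    calc (L ^ (p + α) + u₀ ^ p * L ^ α) * L ^ (p + β + 1)
          + (L ^ (2*p + α + β) + u₀ ^ p * L ^ (p + α + β)) * L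
        = L ^ (p + α) * L ^ (p + β + 1) + u₀ ^ p * (L ^ α * L ^ (p + β + 1))
          + L ^ (2*p + α + β) * L ^ (1:ℝ) + u₀ ^ p * (L ^ (p + α + β) * L ^ (1:ℝ)) := by
          rw [Real.rpow_one]; ring
      _ = L ^ (p + α + (p + β + 1)) + u₀ ^ p * L ^ (α + (p + β + 1))
          + L ^ (2*p + α + β + 1) + u₀ ^ p * L ^ (p + α + β + 1) := by
          rw [key, key, key, key]
      _ = L ^ (p + (α + β + 2*H)) + u₀ ^ p * L ^ (α + β + 2*H)
          + L ^ (p + (α + β + 2*H)) + u₀ ^ p * L ^ (α + β + 2*H) := by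
          rw [show p + α + (p + β + 1) = p + (α + β + 2*H) by rw [hpdef]; ring,
            show α + (p + β + 1) = α + β + 2*H by rw [hpdef]; ring,
            show 2*p + α + β + 1 = p + (α + β + 2*H) by rw [hpdef]; ring,
            show p + α + β + 1 = α + β + 2*H by rw [hpdef]; ring]
      _ = 2 * (L ^ p + u₀ ^ p) * L ^ (α + β + 2*H) := by
          rw [Real.rpow_add hL0]; ring
  calc (∫ u in u₀..s, f u) ≤ ∫ u in u₀..s, g u := hle
    _ = A * (L ^ (p + β + 1) / (p + β + 1)) + C * L := hgval
    _ ≤ 2 * (L ^ p + u₀ ^ p) * L ^ (4*((k:ℝ) - (c:ℝ))*H + 2*H) := hgRHS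
    _ = 2 * ((s - u₀) ^ p + u₀ ^ p) * (s - u₀) ^ (4*((k:ℝ) - (c:ℝ))*H + 2*H) := by
        rw [hLdef]
end

section
/- Let H > 0 be real, let r ≥ 1 and m ≥ 0 be integers, and let u₁, s be real numbers with 0 < u₁ < s. Assume that 2H(m+1) ≥ 1 and that (4r-2)H ≥ 1. Then ∫_{u₁}^{s} (u - u₁)^{4(r-1)H} · [ (s - u)^{2H-1} + (u - u₁)^{2H-1} ] · (s - u)^{2Hm} du ≤ 2 · (s - u₁)^{4(r-1)H + 2Hm + 2H}. -/
open MeasureTheory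

theorem stmt17 (H : ℝ) (r m : ℕ) (u₁ s : ℝ) (hH : 0 < H) (hr : 1 ≤ r)
    (hu₁ : 0 < u₁) (hs : u₁ < s)
    (h1 : 1 ≤ 2*H*((m:ℝ) + 1)) (h2 : 1 ≤ (4*(r:ℝ) - 2)*H) :
    (∫ u in u₁..s,
        (u - u₁) ^ (4*((r:ℝ) - 1)*H) * ((s - u) ^ (2*H - 1) + (u - u₁) ^ (2*H - 1)) *
          (s - u) ^ (2*H*(m:ℝ))) ≤
      2 * (s - u₁) ^ (4*((r:ℝ) - 1)*H + 2*H*(m:ℝ) + 2*H) := by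
  have hr1 : (1:ℝ) ≤ (r:ℝ) := by exact_mod_cast hr
  set D : ℝ := s - u₁ with hDdef
  have hD : 0 < D := by simp [hDdef]; linarith
  set a : ℝ := 4*((r:ℝ) - 1)*H with hadef
  set q1 : ℝ := 2*H*((m:ℝ)+1) - 1 with hq1def
  set q2 : ℝ := (4*(r:ℝ) - 2)*H - 1 with hq2def
  have ha : 0 ≤ a := by
    have : 0 ≤ (r:ℝ) - 1 := by linarith
    positivity
  have hm0 : (0:ℝ) ≤ (m:ℝ) := Nat.cast_nonneg m
  have hq1 : 0 ≤ q1 := by simp [hq1def]; linarith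
  have hq2 : 0 ≤ q2 := by simp [hq2def]; linarith
  set g : ℝ → ℝ := fun u => D ^ a * (s - u) ^ q1 + D ^ (2*H*(m:ℝ)) * (u - u₁) ^ q2
    with hgdef
  -- integrability pieces
  have hint1 : IntervalIntegrable (fun u => (s - u) ^ q1) volume u₁ s := by
    have := (intervalIntegral.intervalIntegrable_rpow (μ := volume)
      (a := 0) (b := D) (r := q1) (Or.inl hq1)).comp_sub_left s
    simpa [hDdef] using this.symm
  have hint2 : IntervalIntegrable (fun u => (u - u₁) ^ q2) volume u₁ s := by
    have := (intervalIntegral.intervalIntegrable_rpow (μ := volume)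
      (a := 0) (b := D) (r := q2) (Or.inl hq2)).comp_sub_right u₁
    simpa [hDdef] using this
  have hgint : IntervalIntegrable g volume u₁ s :=
    ((hint1.const_mul _).add (hint2.const_mul _))
  -- step 1: the integral is ≤ ∫ g
  have step1 : (∫ u in u₁..s,
        (u - u₁) ^ a * ((s - u) ^ (2*H - 1) + (u - u₁) ^ (2*H - 1)) *
          (s - u) ^ (2*H*(m:ℝ))) ≤ ∫ u in u₁..s, g u := by
    rw [intervalIntegral.integral_of_le hs.le, intervalIntegral.integral_of_le hs.le,
      MeasureTheory.integral_Ioc_eq_integral_Ioo, MeasureTheory.integral_Ioc_eq_integral_Ioo]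
    apply MeasureTheory.integral_mono_of_nonneg
    · rw [Filter.EventuallyLE, ae_restrict_iff' measurableSet_Ioo]
      filter_upwards with u hu
      obtain ⟨hu1, hu2⟩ := hu
      have hx : (0:ℝ) ≤ u - u₁ := by linarith
      have hy : (0:ℝ) ≤ s - u := by linarith
      have n1 : (0:ℝ) ≤ (u - u₁) ^ a := Real.rpow_nonneg hx _
      have n2 : (0:ℝ) ≤ (s - u) ^ (2*H - 1) := Real.rpow_nonneg hy _
      have n3 : (0:ℝ) ≤ (u - u₁) ^ (2*H - 1) := Real.rpow_nonneg hx _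
      have n4 : (0:ℝ) ≤ (s - u) ^ (2*H*(m:ℝ)) := Real.rpow_nonneg hy _
      positivity
    · exact (hgint.1.mono_set Set.Ioo_subset_Ioc_self)
    · rw [Filter.EventuallyLE, ae_restrict_iff' measurableSet_Ioo]
      filter_upwards with u hu
      obtain ⟨hu1, hu2⟩ := hu
      have hx : 0 < u - u₁ := by linarith
      have hy : 0 < s - u := by linarith
      have hxD : u - u₁ ≤ D := by simp [hDdef]; linarith
      have hyD : s - u ≤ D := by simp [hDdef]; linarith
      have e1 : (s - u) ^ (2*H - 1) * (s - u) ^ (2*H*(m:ℝ)) = (s - u) ^ q1 := by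
        rw [← Real.rpow_add hy, hq1def]; ring_nf
      have e2 : (u - u₁) ^ a * (u - u₁) ^ (2*H - 1) = (u - u₁) ^ q2 := by
        rw [← Real.rpow_add hx, hadef, hq2def]; ring_nf
      have expand : (u - u₁) ^ a * ((s - u) ^ (2*H - 1) + (u - u₁) ^ (2*H - 1)) *
          (s - u) ^ (2*H*(m:ℝ))
          = (u - u₁) ^ a * (s - u) ^ q1 + (u - u₁) ^ q2 * (s - u) ^ (2*H*(m:ℝ)) := by
        rw [← e1, ← e2]; ring
      rw [expand, hgdef]
      have b1 : (u - u₁) ^ a * (s - u) ^ q1 ≤ D ^ a * (s - u) ^ q1 := by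
        gcongr
        all_goals first
          | exact Real.rpow_le_rpow hx.le hxD ha
          | positivity
      have b2 : (u - u₁) ^ q2 * (s - u) ^ (2*H*(m:ℝ))
          ≤ D ^ (2*H*(m:ℝ)) * (u - u₁) ^ q2 := by
        rw [mul_comm (D ^ (2*H*(m:ℝ)))]
        gcongr
        all_goals first
          | exact Real.rpow_le_rpow hy.le hyD (by positivity)
          | positivity
      exact add_le_add b1 b2
  -- step 2: compute ∫ g
  have i1 : (∫ u in u₁..s, (s - u) ^ q1) = D ^ (q1 + 1) / (q1 + 1) := by
    rw [intervalIntegral.integral_comp_sub_left (fun x => x ^ q1) s]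
    rw [show s - s = (0:ℝ) by ring, show s - u₁ = D from rfl]
    rw [integral_rpow (Or.inl (by linarith))]
    rw [Real.zero_rpow (by linarith)]
    ring
  have i2 : (∫ u in u₁..s, (u - u₁) ^ q2) = D ^ (q2 + 1) / (q2 + 1) := by
    rw [intervalIntegral.integral_comp_sub_right (fun x => x ^ q2) u₁]
    rw [show u₁ - u₁ = (0:ℝ) by ring, show s - u₁ = D from rfl]
    rw [integral_rpow (Or.inl (by linarith))]
    rw [Real.zero_rpow (by linarith)]
    ring
  have step2 : (∫ u in u₁..s, g u)
      = D ^ a * (D ^ (q1 + 1) / (q1 + 1)) + D ^ (2*H*(m:ℝ)) * (D ^ (q2 + 1) / (q2 + 1)) := by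
    rw [hgdef]
    rw [intervalIntegral.integral_add (hint1.const_mul _) (hint2.const_mul _),
      intervalIntegral.integral_const_mul, intervalIntegral.integral_const_mul, i1, i2]
  -- step 3: bound the computed value
  have key : D ^ a * (D ^ (q1 + 1) / (q1 + 1)) + D ^ (2*H*(m:ℝ)) * (D ^ (q2 + 1) / (q2 + 1))
      ≤ 2 * D ^ (a + 2*H*(m:ℝ) + 2*H) := by
    have c1 : D ^ a * D ^ (q1 + 1) = D ^ (a + 2*H*(m:ℝ) + 2*H) := by
      rw [← Real.rpow_add hD, hq1def]; ring_nf
    have c2 : D ^ (2*H*(m:ℝ)) * D ^ (q2 + 1) = D ^ (a + 2*H*(m:ℝ) + 2*H) := by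
      rw [← Real.rpow_add hD, hq2def, hadef]; ring_nf
    have hq11 : (1:ℝ) ≤ q1 + 1 := by linarith
    have hq21 : (1:ℝ) ≤ q2 + 1 := by linarith
    have t1 : D ^ a * (D ^ (q1 + 1) / (q1 + 1)) ≤ D ^ (a + 2*H*(m:ℝ) + 2*H) := by
      rw [mul_div_assoc', c1]
      exact div_le_self (Real.rpow_nonneg hD.le _) hq11
    have t2 : D ^ (2*H*(m:ℝ)) * (D ^ (q2 + 1) / (q2 + 1)) ≤ D ^ (a + 2*H*(m:ℝ) + 2*H) := by
      rw [mul_div_assoc', c2]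
      exact div_le_self (Real.rpow_nonneg hD.le _) hq21
    linarith
  calc _ ≤ ∫ u in u₁..s, g u := step1
    _ = _ := step2
    _ ≤ _ := key
end
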